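/- arXiv:1306.2870 — 6 statements merged into one kernel-verified Lean document; each statement's English description precedes it below -/
import Mathlib

section
/- Let α < 2, γ > 1/2, δ > 1/2 with α = γ + δ, and let 0 < a < b. Then ∫_0^a u^{1−α} (b−u)^{γ−3/2} (a−u)^{δ−3/2} du = (b−a)^{α−2} b^{1/2−δ} a^{1/2−γ} β(δ − 1/2, 2 − α). -/
open MeasureTheory Set Filter

/-- The Beta function `β(x,y) = Γ(x)Γ(y)/Γ(x+y)`. -/
noncomputable def Beta (x y : ℝ) : ℝ := Real.Gamma x * Real.Gamma y / Real.Gamma (x + y)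

/-- The normalizing constant `c_H = (H(2H−1)/β(2−2H, H−1/2))^{1/2}`. -/
noncomputable def cH (H : ℝ) : ℝ := Real.sqrt (H * (2 * H - 1) / Beta (2 - 2 * H) (H - 1 / 2))

/-- The kernel `K_H(t,s)`; equal to
`c_{H_t} s^{1/2−H_t} ∫_s^t (u−s)^{H_t−3/2} u^{H_t−1/2} du` for `s ≤ t` and `0` for `s > t`. -/
noncomputable def KH (H : ℝ → ℝ) (t s : ℝ) : ℝ :=
  if s ≤ t then
    cH (H t) * s ^ ((1 : ℝ) / 2 - H t) *
      ∫ u in s..t, (u - s) ^ (H t - 3 / 2) * u ^ (H t - 1 / 2)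
  else 0

/-- The covariance function `R_H(t,s) = ∫_0^{min(s,t)} K_H(t,u) K_H(s,u) du`. -/
noncomputable def RH (H : ℝ → ℝ) (t s : ℝ) : ℝ :=
  ∫ u in (0 : ℝ)..(min s t), KH H t u * KH H s u

lemma integral_beta (x y : ℝ) (hx : 0 < x) (hy : 0 < y) :
    ∫ t in (0:ℝ)..1, t ^ (x-1) * (1-t) ^ (y-1) = Beta x y := by
  have h := Complex.Gamma_mul_Gamma_eq_betaIntegral (s := (x:ℂ)) (t := (y:ℂ))
    (by simpa using hx) (by simpa using hy)
  have hcast : Complex.betaIntegral x y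
      = ((∫ t in (0:ℝ)..1, t ^ (x-1) * (1-t) ^ (y-1) : ℝ) : ℂ) := by
    rw [Complex.betaIntegral, ← intervalIntegral.integral_ofReal]
    apply intervalIntegral.integral_congr
    intro t ht
    rw [uIcc_of_le zero_le_one] at ht
    simp only []
    rw [Complex.ofReal_mul, Complex.ofReal_cpow ht.1,
      Complex.ofReal_cpow (by linarith [ht.2] : (0:ℝ) ≤ 1 - t)]
    push_cast
    ring
  have hxy : Complex.Gamma (↑x + ↑y) = ((Real.Gamma (x+y) : ℝ) : ℂ) := by
    rw [← Complex.ofReal_add, Complex.Gamma_ofReal]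
  rw [Complex.Gamma_ofReal, Complex.Gamma_ofReal, hxy, hcast] at h
  have h' : Real.Gamma x * Real.Gamma y
      = Real.Gamma (x+y) * ∫ t in (0:ℝ)..1, t ^ (x-1) * (1-t) ^ (y-1) := by exact_mod_cast h
  have hne : Real.Gamma (x+y) ≠ 0 := (Real.Gamma_pos_of_pos (by linarith)).ne'
  rw [Beta, h']
  field_simp

/-- the Beta-integral identity of Lemma A.1(ii). -/
theorem beta_integral_identity (α γ δ a b : ℝ) (hα : α < 2) (hγ : 1 / 2 < γ)
    (hδ : 1 / 2 < δ) (hsum : α = γ + δ) (ha : 0 < a) (hab : a < b) :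
    (∫ u in (0 : ℝ)..a, u ^ (1 - α) * (b - u) ^ (γ - 3 / 2) * (a - u) ^ (δ - 3 / 2))
      = (b - a) ^ (α - 2) * b ^ (1 / 2 - δ) * a ^ (1 / 2 - γ) * Beta (δ - 1 / 2) (2 - α) := by
  have hb : 0 < b := ha.trans hab
  have hba : 0 < b - a := sub_pos.2 hab
  set φ : ℝ → ℝ := fun t => a * b * (1 - t) / (b - a * t) with hφ
  have hsat : ∀ t ∈ Ioo (0:ℝ) 1, 0 < b - a * t := by
    intro t ht; nlinarith [ht.1, ht.2]
  -- derivative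
  have hderiv : ∀ t ∈ Ioo (0:ℝ) 1,
      HasDerivWithinAt φ (-(a * b * (b - a)) / (b - a * t) ^ 2) (Ioo 0 1) t := by
    intro t ht
    have h1 : HasDerivAt (fun t : ℝ => a * b * (1 - t)) (-(a * b)) t := by
      simpa using ((hasDerivAt_id t).const_sub 1).const_mul (a * b)
    have h2 : HasDerivAt (fun t : ℝ => b - a * t) (-a) t := by
      simpa using ((hasDerivAt_id t).const_mul a).const_sub b
    have h3 := h1.div h2 (hsat t ht).ne'
    have h4 : (-(a * b) * (b - a * t) - a * b * (1 - t) * -a) / (b - a * t) ^ 2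
        = -(a * b * (b - a)) / (b - a * t) ^ 2 := by ring
    rw [h4] at h3
    exact h3.hasDerivWithinAt
  -- injectivity
  have hinj : InjOn φ (Ioo 0 1) := by
    intro x hx y hy hxy
    have hx' := hsat x hx
    have hy' := hsat y hy
    rw [hφ] at hxy
    simp only [div_eq_div_iff hx'.ne' hy'.ne'] at hxy
    have h : a * b * (b - a) * (x - y) = 0 := by linear_combination -hxy
    have h2 : x - y = 0 := by
      rcases mul_eq_zero.mp h with h' | h'
      · exact absurd h' (by positivity)
      · exact h'
    linarith
  -- image
  have himg : φ '' Ioo 0 1 = Ioo 0 a := by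
    apply Subset.antisymm
    · rintro _ ⟨t, ht, rfl⟩
      have hst := hsat t ht
      constructor
      · exact div_pos (mul_pos (mul_pos ha hb) (by linarith [ht.2])) hst
      · rw [div_lt_iff₀ hst]
        nlinarith [mul_pos (mul_pos ha ht.1) hba]
    · intro u hu
      have hua : u < a := hu.2
      have hu0 : 0 < u := hu.1
      have hbu : 0 < b - u := by linarith
      have hau : 0 < a - u := by linarith
      refine ⟨b * (a - u) / (a * (b - u)), ⟨?_, ?_⟩, ?_⟩
      · positivity
      · rw [div_lt_one (by positivity)]
        nlinarith
      · have hne : b - a * (b * (a - u) / (a * (b - u))) = b * (b - a) / (b - u) := by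
          field_simp
          ring
        rw [hφ]
        simp only
        rw [hne, div_eq_iff (by positivity)]
        field_simp
        ring
  -- pointwise identity
  have hpt : ∀ t ∈ Ioo (0:ℝ) 1,
      |(-(a * b * (b - a)) / (b - a * t) ^ 2)| *
        (φ t ^ (1 - α) * (b - φ t) ^ (γ - 3 / 2) * (a - φ t) ^ (δ - 3 / 2))
      = (b - a) ^ (α - 2) * b ^ (1 / 2 - δ) * a ^ (1 / 2 - γ) *
          (t ^ (δ - 3 / 2) * (1 - t) ^ (1 - α)) := by
    intro t ht
    have ht0 := ht.1
    have ht1 : 0 < 1 - t := by linarith [ht.2]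
    have hst := hsat t ht
    have habs : |(-(a * b * (b - a)) / (b - a * t) ^ 2)|
        = a * b * (b - a) / (b - a * t) ^ 2 := by
      rw [abs_div, abs_neg, abs_of_pos (by positivity), abs_of_pos (by positivity)]
    have hu0 : 0 < φ t := div_pos (mul_pos (mul_pos ha hb) ht1) hst
    have hbu : b - φ t = b * (b - a) / (b - a * t) := by
      rw [hφ]; field_simp; ring
    have hau : a - φ t = a * t * (b - a) / (b - a * t) := by
      rw [hφ]; field_simp; ring
    rw [habs, hbu, hau]
    have key : ∀ X Y : ℝ, 0 < X → 0 < Y → Real.log X = Real.log Y → X = Y := by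
      intro X Y hX hY h
      exact Real.log_injOn_pos (mem_Ioi.2 hX) (mem_Ioi.2 hY) h
    apply key _ _ (by positivity) (by positivity)
    have l0 : Real.log (φ t) = Real.log a + Real.log b + Real.log (1 - t)
        - Real.log (b - a * t) := by
      rw [hφ]
      simp only
      rw [Real.log_div (by positivity) (by positivity),
        Real.log_mul (by positivity) (by positivity),
        Real.log_mul (by positivity) (by positivity)]
    have q0 : Real.log (a * b * (b - a) / (b - a * t) ^ 2)
        = Real.log a + Real.log b + Real.log (b - a) - 2 * Real.log (b - a * t) := by
      rw [Real.log_div (by positivity) (by positivity),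
        Real.log_mul (by positivity) (by positivity),
        Real.log_mul (by positivity) (by positivity), Real.log_pow]
      push_cast; ring
    have q1 : Real.log (φ t ^ (1 - α))
        = (1 - α) * (Real.log a + Real.log b + Real.log (1 - t) - Real.log (b - a * t)) := by
      rw [Real.log_rpow hu0, l0]
    have q2 : Real.log ((b * (b - a) / (b - a * t)) ^ (γ - 3 / 2))
        = (γ - 3 / 2) * (Real.log b + Real.log (b - a) - Real.log (b - a * t)) := by
      rw [Real.log_rpow (by positivity), Real.log_div (by positivity) (by positivity),
        Real.log_mul (by positivity) (by positivity)]
    have q3 : Real.log ((a * t * (b - a) / (b - a * t)) ^ (δ - 3 / 2))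
        = (δ - 3 / 2) * (Real.log a + Real.log t + Real.log (b - a)
            - Real.log (b - a * t)) := by
      rw [Real.log_rpow (by positivity), Real.log_div (by positivity) (by positivity),
        Real.log_mul (by positivity) (by positivity),
        Real.log_mul (by positivity) (by positivity)]
    rw [Real.log_mul (by positivity) (by positivity),
      Real.log_mul (by positivity) (by positivity),
      Real.log_mul (by positivity) (by positivity),
      Real.log_mul (by positivity) (by positivity),
      Real.log_mul (by positivity) (by positivity),
      Real.log_mul (by positivity) (by positivity),
      Real.log_mul (by positivity) (by positivity),
      q0, q1, q2, q3,
      Real.log_rpow hba, Real.log_rpow hb, Real.log_rpow ha,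
      Real.log_rpow ht0, Real.log_rpow ht1]
    subst hsum
    ring
  -- assemble
  rw [intervalIntegral.integral_of_le ha.le, integral_Ioc_eq_integral_Ioo, ← himg,
    integral_image_eq_integral_abs_deriv_smul measurableSet_Ioo hderiv hinj]
  simp only [smul_eq_mul]
  rw [setIntegral_congr_fun measurableSet_Ioo hpt, MeasureTheory.integral_const_mul _ _,
    ← integral_Ioc_eq_integral_Ioo, ← intervalIntegral.integral_of_le zero_le_one]
  have e1 : (δ - 3 / 2 : ℝ) = (δ - 1 / 2) - 1 := by ring
  have e2 : (1 - α : ℝ) = (2 - α) - 1 := by ring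
  rw [e1, e2, integral_beta _ _ (by linarith) (by linarith)]
end

section
/- Let α, γ ∈ (−1,1) and 0 < a < b, and set J = ∫_a^b y^{−α} ( ∫_0^a z^{α} (y−z)^{−γ} dz ) dy. Then J = (a^{2−γ}/(2−γ)) ∫_{a/b}^1 v^{α+γ−2} (1−v)^{−γ} dv + (b^{2−γ}/(2−γ)) ∫_0^{a/b} v^{α} (1−v)^{−γ} dv − (a^{2−γ}/(2−γ)) β(α+1, 1−γ). -/
open MeasureTheory Set Filter

/-!
Substituting `z = y v` turns the inner integral into `y^(α+1-γ) F(a/y)`, where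
`F(x) = ∫₀ˣ v^α (1-v)^(-γ) dv`, and substituting `y = a/v` then gives
`J = a^(2-γ) ∫_{a/b}^1 v^(γ-3) F(v) dv`. One integration by parts against `v^(γ-2)/(γ-2)`
produces the three terms, with `F(1) = β(α+1, 1-γ)`. No limiting argument is needed at
`v = 1`, where `F'` may blow up: `F` is continuous on `[0, 1]` and `F'` is integrable there.
-/

open intervalIntegral

lemma integral_comp_div_left {a c d : ℝ} (ha : 0 < a) (hc : 0 < c) (hd : 0 < d) (g : ℝ → ℝ) :
    ∫ y in c..d, g (a / y) = ∫ v in (a / d)..(a / c), a / v ^ 2 * g v := by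
  have hpos : ∀ v ∈ uIcc (a / d) (a / c), 0 < v := fun v hv =>
    (lt_min (div_pos ha hd) (div_pos ha hc)).trans_le hv.1
  have hsubst := integral_comp_mul_deriv_of_deriv_nonpos (g := fun y => g (a / y))
    (f := fun v => a / v) (f' := fun v => -(a / v ^ 2)) (a := a / d) (b := a / c)
    (fun v hv => (continuousAt_const.div continuousAt_id (hpos v hv).ne').continuousWithinAt)
    (fun v hv => by
      simpa [div_eq_mul_inv] using
        (hasDerivAt_inv (hpos v (Ioo_subset_Icc_self hv)).ne').const_mul a)
    (fun v hv => by
      have := hpos v (Ioo_subset_Icc_self hv)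
      exact neg_nonpos.2 (by positivity))
  simp only [Function.comp_apply, div_div_cancel₀ ha.ne'] at hsubst
  rw [integral_symm, ← hsubst, ← intervalIntegral.integral_neg]
  exact integral_congr fun v _ => by ring

lemma integral_rpow_mul_comp_div_left {a c d : ℝ} (ha : 0 < a) (hc : 0 < c) (hd : 0 < d)
    (r : ℝ) (g : ℝ → ℝ) :
    ∫ y in c..d, y ^ r * g (a / y)
      = a ^ (r + 1) * ∫ v in (a / d)..(a / c), v ^ (-r - 2) * g v := by
  have hweight : ∀ v ∈ uIcc (a / d) (a / c),
      a / v ^ 2 * (a / v) ^ r = a ^ (r + 1) * v ^ (-r - 2) := by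
    intro v hv
    have hv0 : 0 < v := (lt_min (div_pos ha hd) (div_pos ha hc)).trans_le hv.1
    rw [Real.div_rpow ha.le hv0.le, Real.rpow_add_one ha.ne', show -r - 2 = -(r + 2) by ring,
      Real.rpow_neg hv0.le, Real.rpow_add hv0, Real.rpow_two]
    field_simp
  calc ∫ y in c..d, y ^ r * g (a / y)
      = ∫ y in c..d, (fun v => (a / v) ^ r * g v) (a / y) := by
        simp only [div_div_cancel₀ ha.ne']
    _ = ∫ v in (a / d)..(a / c), a / v ^ 2 * ((a / v) ^ r * g v) :=
        integral_comp_div_left ha hc hd (fun v => (a / v) ^ r * g v)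
    _ = a ^ (r + 1) * ∫ v in (a / d)..(a / c), v ^ (-r - 2) * g v := by
        rw [← intervalIntegral.integral_const_mul]
        exact integral_congr fun v hv => by simp only [← mul_assoc, hweight v hv]

/-- `∫₀ˣ v^p (1-v)^q dv`, the incomplete Beta function `B(x; p+1, q+1)`. -/
noncomputable def incompleteBetaIntegral (p q x : ℝ) : ℝ :=
  ∫ v in (0 : ℝ)..x, v ^ p * (1 - v) ^ q

lemma integral_rpow_mul_sub_rpow {a y : ℝ} (ha : 0 ≤ a) (hay : a ≤ y) (hy : 0 < y) (p q : ℝ) :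
    ∫ z in (0 : ℝ)..a, z ^ p * (y - z) ^ q
      = y ^ (p + q + 1) * incompleteBetaIntegral p q (a / y) := by
  have hscale : ∀ v ∈ uIcc 0 (a / y),
      (y * v) ^ p * (y - y * v) ^ q = y ^ (p + q) * (v ^ p * (1 - v) ^ q) := by
    intro v hv
    rw [uIcc_of_le (by positivity)] at hv
    have hv1 : v ≤ 1 := hv.2.trans ((div_le_one hy).2 hay)
    rw [← mul_one_sub, Real.mul_rpow hy.le hv.1, Real.mul_rpow hy.le (sub_nonneg.2 hv1),
      Real.rpow_add hy]
    ring
  calc ∫ z in (0 : ℝ)..a, z ^ p * (y - z) ^ q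
      = y * ∫ v in (0 : ℝ)..(a / y), (y * v) ^ p * (y - y * v) ^ q := by
        rw [integral_comp_mul_left (fun z => z ^ p * (y - z) ^ q) hy.ne', mul_zero,
          mul_div_cancel₀ _ hy.ne', smul_eq_mul, mul_inv_cancel_left₀ hy.ne']
    _ = y ^ (p + q + 1) * incompleteBetaIntegral p q (a / y) := by
        rw [integral_congr hscale, intervalIntegral.integral_const_mul, incompleteBetaIntegral,
          Real.rpow_add_one hy.ne', mul_left_comm, mul_assoc]

lemma ofReal_rpow_mul_one_sub_rpow {x : ℝ} (hx : x ∈ Icc 0 1) (p q : ℝ) :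
    ((x ^ p * (1 - x) ^ q : ℝ) : ℂ) = (x : ℂ) ^ (p : ℂ) * (1 - (x : ℂ)) ^ (q : ℂ) := by
  rw [Complex.ofReal_mul, Complex.ofReal_cpow hx.1, Complex.ofReal_cpow (sub_nonneg.2 hx.2),
    Complex.ofReal_sub, Complex.ofReal_one]

section IncompleteBeta

variable {p q : ℝ}

lemma intervalIntegrable_rpow_mul_one_sub_rpow (hp : -1 < p) (hq : -1 < q) :
    IntervalIntegrable (fun v : ℝ => v ^ p * (1 - v) ^ q) volume 0 1 := by
  have h := Complex.betaIntegral_convergent (u := p + 1) (v := q + 1)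
    (by simp; linarith) (by simp; linarith)
  simp only [add_sub_cancel_right] at h
  rw [intervalIntegrable_iff_integrableOn_Icc_of_le zero_le_one] at h ⊢
  refine IntegrableOn.congr_fun h.re (fun x hx => ?_) measurableSet_Icc
  rw [← ofReal_rpow_mul_one_sub_rpow hx, RCLike.re_to_complex, Complex.ofReal_re]

lemma incompleteBetaIntegral_one (hp : -1 < p) (hq : -1 < q) :
    incompleteBetaIntegral p q 1 = Beta (p + 1) (q + 1) := by
  have hcomplex : Complex.betaIntegral (p + 1) (q + 1) = incompleteBetaIntegral p q 1 := by
    rw [Complex.betaIntegral, incompleteBetaIntegral, ← intervalIntegral.integral_ofReal]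
    refine integral_congr fun x hx => ?_
    rw [uIcc_of_le zero_le_one] at hx
    simp only [add_sub_cancel_right, ofReal_rpow_mul_one_sub_rpow hx]
  have h := ProbabilityTheory.beta_eq_betaIntegralReal (p + 1) (q + 1) (by linarith) (by linarith)
  push_cast at h
  rw [Beta, ← ProbabilityTheory.beta, h, hcomplex, Complex.ofReal_re]

lemma continuousOn_incompleteBetaIntegral (hp : -1 < p) (hq : -1 < q) :
    ContinuousOn (incompleteBetaIntegral p q) (Icc 0 1) := by
  have h := continuousOn_primitive_interval' (intervalIntegrable_rpow_mul_one_sub_rpow hp hq)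
    left_mem_uIcc
  rwa [uIcc_of_le zero_le_one] at h

lemma hasDerivAt_incompleteBetaIntegral (hp : -1 < p) (hq : -1 < q) {x : ℝ}
    (hx : x ∈ Ioo 0 1) :
    HasDerivAt (incompleteBetaIntegral p q) (x ^ p * (1 - x) ^ q) x := by
  have hcont : ContinuousOn (fun v : ℝ => v ^ p * (1 - v) ^ q) (Ioo 0 1) := fun v hv =>
    ((Real.continuousAt_rpow_const v p (Or.inl hv.1.ne')).mul
      ((continuousAt_const.sub continuousAt_id).rpow_const
        (Or.inl (sub_pos.2 hv.2).ne'))).continuousWithinAt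
  refine integral_hasDerivAt_right ?_ (hcont.stronglyMeasurableAtFilter isOpen_Ioo x hx)
    (hcont.continuousAt (isOpen_Ioo.mem_nhds hx))
  refine (intervalIntegrable_rpow_mul_one_sub_rpow hp hq).mono_set ?_
  rw [uIcc_of_le hx.1.le, uIcc_of_le zero_le_one]
  exact Icc_subset_Icc_right hx.2.le

lemma integral_rpow_mul_incompleteBetaIntegral (hp : -1 < p) (hq : -1 < q) {s m : ℝ}
    (hs : 0 < s) (hs1 : s ≤ 1) (hm : m ≠ 0) :
    ∫ v in s..1, v ^ (m - 1) * incompleteBetaIntegral p q v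
      = (incompleteBetaIntegral p q 1 - s ^ m * incompleteBetaIntegral p q s) / m
        - (∫ v in s..1, v ^ (p + m) * (1 - v) ^ q) / m := by
  have hsub : uIcc s 1 ⊆ Icc 0 1 := by
    rw [uIcc_of_le hs1]
    exact Icc_subset_Icc_left hs.le
  have hpos : ∀ v ∈ uIcc s 1, 0 < v := fun v hv => hs.trans_le (by simpa [hs1] using hv.1)
  have hinterior : Ioo (min s 1) (max s 1) ⊆ Ioo 0 1 := by
    rw [min_eq_left hs1, max_eq_right hs1]
    exact Ioo_subset_Ioo_left hs.le
  have hweight : ∀ v ∈ uIcc s 1, HasDerivAt (fun v => v ^ m / m) (v ^ (m - 1)) v := by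
    intro v hv
    simpa only [mul_div_cancel_left₀ _ hm] using
      (Real.hasDerivAt_rpow_const (p := m) (Or.inl (hpos v hv).ne')).div_const m
  have hparts := integral_mul_deriv_eq_deriv_mul_of_hasDerivAt
    ((continuousOn_incompleteBetaIntegral hp hq).mono hsub)
    (fun v hv => (hweight v hv).continuousAt.continuousWithinAt)
    (fun v hv => hasDerivAt_incompleteBetaIntegral hp hq (hinterior hv))
    (fun v hv => hweight v (Ioo_subset_Icc_self hv))
    ((intervalIntegrable_rpow_mul_one_sub_rpow hp hq).mono_set
      (by rwa [uIcc_of_le zero_le_one]))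
    (ContinuousOn.intervalIntegrable fun v hv =>
      (Real.continuousAt_rpow_const v (m - 1) (Or.inl (hpos v hv).ne')).continuousWithinAt)
  have hcomm : ∫ v in s..1, v ^ (m - 1) * incompleteBetaIntegral p q v
      = ∫ v in s..1, incompleteBetaIntegral p q v * v ^ (m - 1) :=
    integral_congr fun v _ => mul_comm _ _
  have hremainder : ∫ v in s..1, v ^ p * (1 - v) ^ q * (v ^ m / m)
      = (∫ v in s..1, v ^ (p + m) * (1 - v) ^ q) / m := by
    rw [← intervalIntegral.integral_div]
    refine integral_congr fun v hv => ?_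
    simp only [Real.rpow_add (hpos v hv)]
    ring
  rw [hcomm, hparts, hremainder, Real.one_rpow]
  ring

end IncompleteBeta

lemma rpow_mul_div_rpow_neg {a b : ℝ} (ha : 0 < a) (hb : 0 < b) (r : ℝ) :
    a ^ r * (a / b) ^ (-r) = b ^ r := by
  rw [Real.div_rpow ha.le hb.le, mul_div_assoc', ← Real.rpow_add ha, add_neg_cancel,
    Real.rpow_zero, Real.rpow_neg hb.le, one_div, inv_inv]

/-- the double-integral identity of Lemma A.1(iii). -/
theorem double_integral_identity (α γ a b : ℝ) (hα : α ∈ Set.Ioo (-1 : ℝ) 1)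
    (hγ : γ ∈ Set.Ioo (-1 : ℝ) 1) (ha : 0 < a) (hab : a < b) :
    (∫ y in a..b, y ^ (-α) * ∫ z in (0 : ℝ)..a, z ^ α * (y - z) ^ (-γ))
      = a ^ (2 - γ) / (2 - γ) * (∫ v in (a / b)..1, v ^ (α + γ - 2) * (1 - v) ^ (-γ))
        + b ^ (2 - γ) / (2 - γ) * (∫ v in (0 : ℝ)..(a / b), v ^ α * (1 - v) ^ (-γ))
        - a ^ (2 - γ) / (2 - γ) * Beta (α + 1) (1 - γ) := by
  have hb : 0 < b := ha.trans hab
  have hp : -1 < α := hα.1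
  have hq : -1 < -γ := neg_lt_neg hγ.2
  have hm : γ - 2 ≠ 0 := by linarith [hγ.2]
  have hinner : ∀ y ∈ uIcc a b, y ^ (-α) * ∫ z in (0 : ℝ)..a, z ^ α * (y - z) ^ (-γ)
      = y ^ (1 - γ) * incompleteBetaIntegral α (-γ) (a / y) := by
    intro y hy
    rw [uIcc_of_le hab.le] at hy
    have hy0 : 0 < y := ha.trans_le hy.1
    rw [integral_rpow_mul_sub_rpow ha.le hy.1 hy0, ← mul_assoc, ← Real.rpow_add hy0,
      show -α + (α + -γ + 1) = 1 - γ by ring]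
  calc (∫ y in a..b, y ^ (-α) * ∫ z in (0 : ℝ)..a, z ^ α * (y - z) ^ (-γ))
      = ∫ y in a..b, y ^ (1 - γ) * incompleteBetaIntegral α (-γ) (a / y) :=
        integral_congr hinner
    _ = a ^ (2 - γ) * ∫ v in (a / b)..1, v ^ (γ - 2 - 1) * incompleteBetaIntegral α (-γ) v := by
        rw [integral_rpow_mul_comp_div_left ha ha hb, div_self ha.ne',
          show 1 - γ + 1 = 2 - γ by ring, show -(1 - γ) - 2 = γ - 2 - 1 by ring]
    _ = a ^ (2 - γ) * ((incompleteBetaIntegral α (-γ) 1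
            - (a / b) ^ (γ - 2) * incompleteBetaIntegral α (-γ) (a / b)) / (γ - 2)
          - (∫ v in (a / b)..1, v ^ (α + (γ - 2)) * (1 - v) ^ (-γ)) / (γ - 2)) := by
        rw [integral_rpow_mul_incompleteBetaIntegral hp hq (div_pos ha hb)
          ((div_le_one hb).2 hab.le) hm]
    _ = _ := by
        rw [incompleteBetaIntegral_one hp hq, ← add_sub_assoc, neg_add_eq_sub,
          ← rpow_mul_div_rpow_neg ha hb (2 - γ), neg_sub, incompleteBetaIntegral]
        have : 2 - γ ≠ 0 := by linarith [hγ.2]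
        field_simp
        ring
end

section
/- Let H : [0,∞) → (1/2,1) be measurable and let s, t > 0. Then R_H(t,s) = c_{t,s} ∫_0^t ∫_0^s [ β¹_{s,t} 1_{{y>z}} + β¹_{t,s} 1_{{y<z}} ] (y/z)^{H_t−H_s} |y−z|^{H_s+H_t−2} dz dy. -/
/-
Expanding both kernels, `R_H(t,s)` is `c_{t,s}` times the integral over `0 < u < y < t`,
`u < z < s` of `u^{1-H_t-H_s} (y-u)^{H_t-3/2} y^{H_t-1/2} (z-u)^{H_s-3/2} z^{H_s-1/2}`.
The integrand is nonnegative, so Tonelli's theorem (in `ℝ≥0∞`) lets us integrate in `u` first,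
over `0 < u < min y z`. For `z < y` the Möbius substitution `u = yz(1-v)/(y-vz)` maps `(0,1)` onto
`(0,z)` and turns the `u`-integral into the Beta integral
`B(H_s-1/2, 2-H_t-H_s) y^{1/2-H_s} z^{1/2-H_t} (y-z)^{H_t+H_s-2}`; the case `y < z` is symmetric
and the diagonal is null. Bounding each kernel integral by a constant shows that everything is
finite, so the identity passes from `ℝ≥0∞` back to `ℝ`.
-/

open MeasureTheory Set Filter

open Function
open scoped ENNReal

lemma measurable_setLIntegral {α β : Type*} [MeasurableSpace α] [MeasurableSpace β]
    {ν : Measure β} [SFinite ν] {f : α → β → ℝ≥0∞} (hf : Measurable (uncurry f))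
    {t : α → Set β} (ht : MeasurableSet {p : α × β | p.2 ∈ t p.1}) :
    Measurable fun x => ∫⁻ y in t x, f x y ∂ν := by
  have hslice : ∀ x, MeasurableSet (t x) := fun x => measurable_prodMk_left ht
  have hind : ∀ x y, (t x).indicator (f x) y =
      {p : α × β | p.2 ∈ t p.1}.indicator (uncurry f) (x, y) := by
    intro x y
    by_cases hy : y ∈ t x <;> simp [hy]
  simp_rw [← lintegral_indicator (hslice _), hind]
  exact (hf.indicator ht).lintegral_prod_right'

lemma setLIntegral_setLIntegral_eq_lintegral_lintegral_indicator {α β : Type*}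
    [MeasurableSpace α] [MeasurableSpace β] {μ : Measure α} {ν : Measure β}
    (f : α → β → ℝ≥0∞) {s : Set α} (hs : MeasurableSet s) {t : α → Set β}
    (ht : ∀ x, MeasurableSet (t x)) :
    ∫⁻ x in s, ∫⁻ y in t x, f x y ∂ν ∂μ =
      ∫⁻ x, ∫⁻ y, {p : α × β | p.1 ∈ s ∧ p.2 ∈ t p.1}.indicator (uncurry f) (x, y) ∂ν ∂μ := by
  rw [← lintegral_indicator hs]
  refine lintegral_congr fun x => ?_
  by_cases hx : x ∈ s
  · rw [indicator_of_mem hx, ← lintegral_indicator (ht x)]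
    refine lintegral_congr fun y => ?_
    by_cases hy : y ∈ t x <;> simp [hx, hy]
  · simp [hx]

lemma setLIntegral_Ioo_setLIntegral_Ioo_swap {f : ℝ → ℝ → ℝ≥0∞} (hf : Measurable (uncurry f))
    (a b c : ℝ) :
    ∫⁻ x in Ioo a b, ∫⁻ y in Ioo x c, f x y = ∫⁻ y in Ioo a c, ∫⁻ x in Ioo a (min y b), f x y := by
  rw [setLIntegral_setLIntegral_eq_lintegral_lintegral_indicator _ measurableSet_Ioo
      (fun _ => measurableSet_Ioo),
    setLIntegral_setLIntegral_eq_lintegral_lintegral_indicator _ measurableSet_Ioo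
      (fun _ => measurableSet_Ioo),
    lintegral_lintegral_swap]
  · refine lintegral_congr fun x => lintegral_congr fun y => ?_
    simp only [indicator, mem_ofPred_eq, mem_Ioo, lt_min_iff, uncurry_apply_pair]
    grind
  · exact (hf.indicator ((measurableSet_Ioo.preimage measurable_fst).inter
      ((measurableSet_lt measurable_fst measurable_snd).inter
        (measurableSet_lt measurable_snd measurable_const)))).aemeasurable

lemma setLIntegral_Ioo_triple_swap {F : ℝ → ℝ → ℝ → ℝ≥0∞}
    (hF : Measurable fun p : ℝ × ℝ × ℝ => F p.1 p.2.1 p.2.2) (a s t : ℝ) :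
    ∫⁻ u in Ioo a (min s t), ∫⁻ y in Ioo u t, ∫⁻ z in Ioo u s, F u y z =
      ∫⁻ y in Ioo a t, ∫⁻ z in Ioo a s, ∫⁻ u in Ioo a (min y z), F u y z := by
  have hinner : Measurable (uncurry fun u y => ∫⁻ z in Ioo u s, F u y z) :=
    measurable_setLIntegral (f := fun (p : ℝ × ℝ) z => F p.1 p.2 z) (t := fun p => Ioo p.1 s)
      (hF.comp (f := fun q : (ℝ × ℝ) × ℝ => (q.1.1, q.1.2, q.2)) (by fun_prop))
      ((measurableSet_lt (by fun_prop) measurable_snd).inter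
        (measurableSet_lt measurable_snd measurable_const))
  rw [setLIntegral_Ioo_setLIntegral_Ioo_swap hinner]
  refine setLIntegral_congr_fun measurableSet_Ioo fun y hy => ?_
  rw [setLIntegral_Ioo_setLIntegral_Ioo_swap (f := fun u z => F u y z)
    (hF.comp (f := fun q : ℝ × ℝ => (q.1, y, q.2)) (by fun_prop))]
  refine setLIntegral_congr_fun measurableSet_Ioo fun z hz => ?_
  rw [show min z (min y (min s t)) = min y z by grind]

lemma lintegral_Ioo_rpow_mul_one_sub_rpow {p q : ℝ} (hp : 0 < p) (hq : 0 < q) :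
    ∫⁻ v in Ioo 0 1, ENNReal.ofReal (v ^ (p - 1) * (1 - v) ^ (q - 1)) =
      ENNReal.ofReal (Beta p q) := by
  -- `Beta` is definitionally `ProbabilityTheory.beta`.
  have hpdf := ProbabilityTheory.lintegral_betaPDF_eq_one hp hq
  rw [ProbabilityTheory.lintegral_betaPDF] at hpdf
  have hB : 0 < Beta p q := ProbabilityTheory.beta_pos hp hq
  calc ∫⁻ v in Ioo 0 1, ENNReal.ofReal (v ^ (p - 1) * (1 - v) ^ (q - 1))
      = ∫⁻ v in Ioo 0 1, ENNReal.ofReal (Beta p q) *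
          ENNReal.ofReal (1 / Beta p q * v ^ (p - 1) * (1 - v) ^ (q - 1)) := by
        refine lintegral_congr fun v => ?_
        rw [← ENNReal.ofReal_mul hB.le]
        congr 1
        field_simp
    _ = ENNReal.ofReal (Beta p q) := by
        rw [lintegral_const_mul' _ _ ENNReal.ofReal_ne_top]
        exact (congrArg _ hpdf).trans (mul_one _)

section Mobius

variable {y z : ℝ}

lemma image_mobius (hz : 0 < z) (hzy : z < y) :
    (fun v => y * z * (1 - v) / (y - v * z)) '' Ioo 0 1 = Ioo 0 z := by
  have hy : 0 < y := hz.trans hzy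
  ext u
  constructor
  · rintro ⟨v, ⟨hv0, hv1⟩, rfl⟩
    have hD : 0 < y - v * z := by nlinarith
    have h1v : 0 < 1 - v := by linarith
    refine ⟨by positivity, ?_⟩
    rw [div_lt_iff₀ hD]
    nlinarith [mul_pos (mul_pos hv0 hz) (sub_pos.mpr hzy)]
  · rintro ⟨hu0, huz⟩
    have hyu : 0 < y - u := by linarith
    refine ⟨y * (z - u) / (z * (y - u)), ⟨by apply div_pos <;> nlinarith, ?_⟩, ?_⟩
    · rw [div_lt_one (by positivity)]; nlinarith
    · field_simp
      rw [div_eq_iff (by linarith)]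
      ring

lemma hasDerivAt_mobius {v : ℝ} (hv : y - v * z ≠ 0) :
    HasDerivAt (fun v => y * z * (1 - v) / (y - v * z))
      (y * z * (z - y) / (y - v * z) ^ 2) v := by
  have h := (((hasDerivAt_id v).const_sub 1).const_mul (y * z)).div
    (((hasDerivAt_id v).mul_const z).const_sub y) hv
  exact h.congr_deriv (by simp only [id]; ring)

lemma injOn_mobius (hz : 0 < z) (hzy : z < y) :
    InjOn (fun v => y * z * (1 - v) / (y - v * z)) (Ioo 0 1) := by
  intro v ⟨_, hv⟩ w ⟨_, hw⟩ hvw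
  have hDv : 0 < y - v * z := by nlinarith
  have hDw : 0 < y - w * z := by nlinarith
  rw [div_eq_div_iff hDv.ne' hDw.ne'] at hvw
  have : (v - w) * (y * z * (y - z)) = 0 := by linear_combination -hvw
  have : 0 < y * z * (y - z) := by have := hz.trans hzy; have := sub_pos.mpr hzy; positivity
  nlinarith

lemma abs_deriv_mobius_mul {p q v : ℝ} (hz : 0 < z) (hzy : z < y) (hv : v ∈ Ioo (0 : ℝ) 1) :
    |y * z * (z - y) / (y - v * z) ^ 2| *
      ((y * z * (1 - v) / (y - v * z)) ^ (q - 1) * (z - y * z * (1 - v) / (y - v * z)) ^ (p - 1) *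
        (y - y * z * (1 - v) / (y - v * z)) ^ (-(p + q))) =
      z ^ (p + q - 1) * y ^ (-p) * (y - z) ^ (-q) * (v ^ (p - 1) * (1 - v) ^ (q - 1)) := by
  obtain ⟨hv0, hv1⟩ := hv
  have hy : 0 < y := hz.trans hzy
  have hyz : 0 < y - z := sub_pos.mpr hzy
  have h1v : 0 < 1 - v := sub_pos.mpr hv1
  have hD : 0 < y - v * z := by nlinarith
  have hz_sub : z - y * z * (1 - v) / (y - v * z) = z * v * (y - z) / (y - v * z) := by
    rw [eq_div_iff hD.ne', sub_mul, div_mul_cancel₀ _ hD.ne']; ring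
  have hy_sub : y - y * z * (1 - v) / (y - v * z) = y * (y - z) / (y - v * z) := by
    rw [eq_div_iff hD.ne', sub_mul, div_mul_cancel₀ _ hD.ne']; ring
  have habs : |y * z * (z - y) / (y - v * z) ^ 2| =
      y ^ (1 : ℝ) * z ^ (1 : ℝ) * (y - z) ^ (1 : ℝ) / (y - v * z) ^ (2 : ℝ) := by
    rw [Real.rpow_two, Real.rpow_one, Real.rpow_one, Real.rpow_one, abs_div,
      abs_of_pos (by positivity : 0 < (y - v * z) ^ 2),
      abs_of_neg (by nlinarith [mul_pos (mul_pos hy hz) hyz])]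
    ring
  rw [hz_sub, hy_sub, habs, Real.div_rpow (by positivity) hD.le, Real.div_rpow (by positivity) hD.le,
    Real.div_rpow (by positivity) hD.le,
    Real.mul_rpow (by positivity) h1v.le, Real.mul_rpow hy.le hz.le,
    Real.mul_rpow hy.le hyz.le, Real.mul_rpow (by positivity) hyz.le, Real.mul_rpow hz.le hv0.le]
  simp only [Real.rpow_def_of_pos hy, Real.rpow_def_of_pos hz, Real.rpow_def_of_pos hv0,
    Real.rpow_def_of_pos h1v, Real.rpow_def_of_pos hyz, Real.rpow_def_of_pos hD,
    div_eq_mul_inv, ← Real.exp_neg, ← Real.exp_add]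
  congr 1
  ring

lemma lintegral_Ioo_rpow_mul_sub_rpow_mul_sub_rpow {p q : ℝ} (hp : 0 < p) (hq : 0 < q)
    (hz : 0 < z) (hzy : z < y) :
    ∫⁻ u in Ioo 0 z, ENNReal.ofReal (u ^ (q - 1) * (z - u) ^ (p - 1) * (y - u) ^ (-(p + q))) =
      ENNReal.ofReal (z ^ (p + q - 1) * y ^ (-p) * (y - z) ^ (-q) * Beta p q) := by
  have hC : 0 ≤ z ^ (p + q - 1) * y ^ (-p) * (y - z) ^ (-q) := by
    have := hz.trans hzy; have := sub_pos.mpr hzy; positivity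
  rw [← image_mobius hz hzy, lintegral_image_eq_lintegral_abs_deriv_mul measurableSet_Ioo
      (fun v hv => (hasDerivAt_mobius (by nlinarith [hv.2])).hasDerivWithinAt)
      (injOn_mobius hz hzy),
    ENNReal.ofReal_mul hC, ← lintegral_Ioo_rpow_mul_one_sub_rpow hp hq,
    ← lintegral_const_mul' _ _ ENNReal.ofReal_ne_top]
  refine setLIntegral_congr_fun measurableSet_Ioo fun v hv => ?_
  rw [← ENNReal.ofReal_mul (abs_nonneg _), ← ENNReal.ofReal_mul hC, abs_deriv_mobius_mul hz hzy hv]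

end Mobius

noncomputable def kernelIntegrand (c u x : ℝ) : ℝ := (x - u) ^ (c - 3 / 2) * x ^ (c - 1 / 2)

noncomputable def covDensity (a b y z : ℝ) : ℝ :=
  ((if z < y then Beta (b - 1 / 2) (2 - b - a) else 0)
      + (if y < z then Beta (a - 1 / 2) (2 - a - b) else 0))
    * (y / z) ^ (a - b) * |y - z| ^ (b + a - 2)

section CovDensity

variable {a b y z : ℝ}

lemma covDensity_comm (hy : 0 < y) (hz : 0 < z) : covDensity b a z y = covDensity a b y z := by
  have hyz : (z / y) ^ (b - a) = (y / z) ^ (a - b) := by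
    rw [← inv_div, Real.inv_rpow (by positivity), ← Real.rpow_neg (by positivity), neg_sub]
  rw [covDensity, covDensity, hyz, abs_sub_comm, add_comm b a]
  ring

lemma covDensity_nonneg (ha : 1 / 2 < a) (hb : 1 / 2 < b) (hab : a + b < 2) (hy : 0 ≤ y)
    (hz : 0 ≤ z) : 0 ≤ covDensity a b y z := by
  have h1 : 0 < Beta (b - 1 / 2) (2 - b - a) :=
    ProbabilityTheory.beta_pos (by linarith) (by linarith)
  have h2 : 0 < Beta (a - 1 / 2) (2 - a - b) :=
    ProbabilityTheory.beta_pos (by linarith) (by linarith)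
  unfold covDensity
  split_ifs <;> positivity

lemma measurable_covDensity : Measurable (uncurry (covDensity a b)) := by
  change Measurable fun p : ℝ × ℝ => covDensity a b p.1 p.2
  unfold covDensity
  refine (((Measurable.ite (measurableSet_lt measurable_snd measurable_fst) measurable_const
    measurable_const).add (Measurable.ite (measurableSet_lt measurable_fst measurable_snd)
    measurable_const measurable_const)).mul (by fun_prop)).mul (by fun_prop)

lemma setLIntegral_kernelIntegrand_mul_eq_covDensity (ha : 1 / 2 < a) (hb : 1 / 2 < b)
    (hab : a + b < 2) (hy : 0 < y) (hz : 0 < z) (hyz : y ≠ z) :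
    ∫⁻ u in Ioo 0 (min y z), ENNReal.ofReal (u ^ (1 - a - b)) *
        ENNReal.ofReal (kernelIntegrand a u y) * ENNReal.ofReal (kernelIntegrand b u z) =
      ENNReal.ofReal (covDensity a b y z) := by
  wlog hzy : z < y generalizing a b y z
  · rw [min_comm, ← covDensity_comm hy hz,
      ← this hb ha (by linarith) hz hy hyz.symm (lt_of_le_of_ne (not_lt.mp hzy) hyz)]
    refine lintegral_congr fun u => ?_
    rw [sub_right_comm, mul_right_comm]
  have hy' : 0 < y - z := sub_pos.mpr hzy
  -- the exponents of the Euler integral with `p = b - 1/2`, `q = 2 - a - b`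
  have hfactor : ∀ u ∈ Ioo 0 z, ENNReal.ofReal (u ^ (1 - a - b)) *
      ENNReal.ofReal (kernelIntegrand a u y) * ENNReal.ofReal (kernelIntegrand b u z) =
      ENNReal.ofReal (y ^ (a - 1 / 2) * z ^ (b - 1 / 2)) * ENNReal.ofReal
        (u ^ ((2 - a - b) - 1) * (z - u) ^ ((b - 1 / 2) - 1) *
          (y - u) ^ (-((b - 1 / 2) + (2 - a - b)))) := by
    rintro u ⟨hu, huz⟩
    have : 0 < y - u := by linarith
    have : 0 < z - u := by linarith
    simp only [kernelIntegrand]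
    rw [← ENNReal.ofReal_mul (by positivity), ← ENNReal.ofReal_mul (by positivity),
      ← ENNReal.ofReal_mul (by positivity)]
    congr 1
    ring_nf
  rw [min_eq_right hzy.le, setLIntegral_congr_fun measurableSet_Ioo hfactor,
    lintegral_const_mul' _ _ ENNReal.ofReal_ne_top,
    lintegral_Ioo_rpow_mul_sub_rpow_mul_sub_rpow (by linarith) (by linarith) hz hzy,
    ← ENNReal.ofReal_mul (by positivity)]
  congr 1
  rw [covDensity, if_pos hzy, if_neg hzy.not_gt, add_zero, abs_of_pos hy',
    Real.div_rpow hy.le hz.le]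
  simp only [Real.rpow_def_of_pos hy, Real.rpow_def_of_pos hz, Real.rpow_def_of_pos hy',
    div_eq_mul_inv, ← Real.exp_neg, ← Real.exp_add]
  rw [sub_right_comm (2 : ℝ) b a, mul_assoc (Beta _ _), ← Real.exp_add, ← mul_assoc,
    ← Real.exp_add, mul_comm]
  congr 2
  ring

end CovDensity

lemma lintegral_Ioo_sub_rpow {r u T : ℝ} (hr : -1 < r) (huT : u ≤ T) :
    ∫⁻ x in Ioo u T, ENNReal.ofReal ((x - u) ^ r) =
      ENNReal.ofReal ((T - u) ^ (r + 1) / (r + 1)) := by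
  have hint : IntervalIntegrable (fun x => (x - u) ^ r) volume u T := by
    simpa using
      (intervalIntegral.intervalIntegrable_rpow' hr (a := 0) (b := T - u)).comp_sub_right u
  rw [← ofReal_integral_eq_lintegral_ofReal
      ((intervalIntegrable_iff_integrableOn_Ioo_of_le huT).mp hint)
      (ae_restrict_of_forall_mem measurableSet_Ioo fun x hx =>
        Real.rpow_nonneg (by linarith [hx.1]) _),
    ← integral_Ioc_eq_integral_Ioo, ← intervalIntegral.integral_of_le huT,
    intervalIntegral.integral_comp_sub_right (fun x => x ^ r), sub_self,
    integral_rpow (Or.inl hr), Real.zero_rpow (by linarith), sub_zero]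

noncomputable def kernelLIntegral (c T u : ℝ) : ℝ≥0∞ :=
  ∫⁻ x in Ioo u T, ENNReal.ofReal (kernelIntegrand c u x)

noncomputable def covLIntegral (a b t s : ℝ) : ℝ≥0∞ :=
  ∫⁻ u in Ioo 0 (min s t),
    ENNReal.ofReal (u ^ (1 - a - b)) * kernelLIntegral a t u * kernelLIntegral b s u

section Kernel

variable {c u T : ℝ}

lemma measurable_kernelLIntegral (c T : ℝ) : Measurable (kernelLIntegral c T) :=
  measurable_setLIntegral (by unfold kernelIntegrand; fun_prop)
    ((measurableSet_lt measurable_fst measurable_snd).inter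
      (measurableSet_lt measurable_snd measurable_const))

lemma kernelLIntegral_le (hc : 1 / 2 < c) (hu : 0 ≤ u) (huT : u ≤ T) :
    kernelLIntegral c T u ≤
      ENNReal.ofReal (T ^ (c - 1 / 2)) * ENNReal.ofReal (T ^ (c - 1 / 2) / (c - 1 / 2)) := by
  calc kernelLIntegral c T u
      ≤ ∫⁻ x in Ioo u T,
          ENNReal.ofReal (T ^ (c - 1 / 2)) * ENNReal.ofReal ((x - u) ^ (c - 3 / 2)) := by
        refine setLIntegral_mono' measurableSet_Ioo fun x ⟨hux, hxT⟩ => ?_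
        have hT : 0 ≤ T := hu.trans huT
        rw [← ENNReal.ofReal_mul (by positivity), kernelIntegrand, mul_comm]
        gcongr
        linarith
    _ = ENNReal.ofReal (T ^ (c - 1 / 2)) *
          ENNReal.ofReal ((T - u) ^ (c - 1 / 2) / (c - 1 / 2)) := by
        rw [lintegral_const_mul' _ _ ENNReal.ofReal_ne_top,
          lintegral_Ioo_sub_rpow (by linarith) huT, show c - 3 / 2 + 1 = c - 1 / 2 by ring]
    _ ≤ _ := by
        gcongr
        linarith

lemma KH_eq_toReal_kernelLIntegral (H : ℝ → ℝ) (hu : 0 ≤ u) (huT : u ≤ T) :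
    KH H T u = cH (H T) * u ^ ((1 : ℝ) / 2 - H T) * (kernelLIntegral (H T) T u).toReal := by
  have hnonneg : ∀ x ∈ Ioo u T, 0 ≤ kernelIntegrand (H T) u x := fun x ⟨hux, _⟩ =>
    mul_nonneg (Real.rpow_nonneg (by linarith) _) (Real.rpow_nonneg (by linarith) _)
  rw [KH, if_pos huT, intervalIntegral.integral_of_le huT, integral_Ioc_eq_integral_Ioo,
    kernelLIntegral,
    ← integral_eq_lintegral_of_nonneg_ae (ae_restrict_of_forall_mem measurableSet_Ioo hnonneg)
      (by unfold kernelIntegrand; fun_prop)]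
  rfl

end Kernel

section Covariance

variable {a b s t : ℝ}

lemma covLIntegral_ne_top (ha : 1 / 2 < a) (hb : 1 / 2 < b) (hab : a + b < 2)
    (hs : 0 ≤ s) (ht : 0 ≤ t) : covLIntegral a b t s ≠ ∞ := by
  have hbound : ∀ u ∈ Ioo 0 (min s t),
      ENNReal.ofReal (u ^ (1 - a - b)) * kernelLIntegral a t u * kernelLIntegral b s u ≤
      ENNReal.ofReal (u ^ (1 - a - b)) *
        (ENNReal.ofReal (t ^ (a - 1 / 2)) * ENNReal.ofReal (t ^ (a - 1 / 2) / (a - 1 / 2))) *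
        (ENNReal.ofReal (s ^ (b - 1 / 2)) * ENNReal.ofReal (s ^ (b - 1 / 2) / (b - 1 / 2))) :=
    fun u ⟨hu, hum⟩ => by
      gcongr
      · exact kernelLIntegral_le ha hu.le (hum.le.trans (min_le_right s t))
      · exact kernelLIntegral_le hb hu.le (hum.le.trans (min_le_left s t))
  have hsing := lintegral_Ioo_sub_rpow (u := 0) (r := 1 - a - b) (by linarith) (le_min hs ht)
  simp only [sub_zero] at hsing
  refine ne_top_of_le_ne_top ?_ (setLIntegral_mono' measurableSet_Ioo hbound)
  rw [lintegral_mul_const' _ _ (by finiteness), lintegral_mul_const' _ _ (by finiteness), hsing]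
  finiteness

lemma covLIntegral_eq_lintegral_covDensity (ha : 1 / 2 < a) (hb : 1 / 2 < b) (hab : a + b < 2) :
    covLIntegral a b t s =
      ∫⁻ y in Ioo 0 t, ∫⁻ z in Ioo 0 s, ENNReal.ofReal (covDensity a b y z) := by
  have hk : ∀ c u, Measurable fun x => ENNReal.ofReal (kernelIntegrand c u x) := by
    unfold kernelIntegrand; fun_prop
  have hprod : ∀ u,
      ENNReal.ofReal (u ^ (1 - a - b)) * kernelLIntegral a t u * kernelLIntegral b s u =
      ∫⁻ y in Ioo u t, ∫⁻ z in Ioo u s, ENNReal.ofReal (u ^ (1 - a - b)) *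
        ENNReal.ofReal (kernelIntegrand a u y) * ENNReal.ofReal (kernelIntegrand b u z) := by
    intro u
    rw [kernelLIntegral, kernelLIntegral, ← lintegral_const_mul _ (hk a u),
      ← lintegral_mul_const _ ((hk a u).const_mul _)]
    refine lintegral_congr fun y => ?_
    rw [← lintegral_const_mul _ (hk b u)]
  rw [covLIntegral, lintegral_congr hprod,
    setLIntegral_Ioo_triple_swap (by unfold kernelIntegrand; fun_prop)]
  refine setLIntegral_congr_fun measurableSet_Ioo fun y hy => lintegral_congr_ae ?_
  have hne : ∀ᵐ z : ℝ, z ≠ y := measure_eq_zero_iff_ae_notMem.mp (measure_singleton y)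
  filter_upwards [self_mem_ae_restrict measurableSet_Ioo, ae_restrict_of_ae hne] with z hz hzy
  exact setLIntegral_kernelIntegrand_mul_eq_covDensity ha hb hab hy.1 hz.1 hzy.symm

end Covariance

lemma intervalIntegral_intervalIntegral_eq_toReal_setLIntegral {f : ℝ → ℝ → ℝ}
    (hf : Measurable (uncurry f)) {a b c d : ℝ} (hab : a ≤ b) (hcd : c ≤ d)
    (hf0 : ∀ y ∈ Ioo a b, ∀ z ∈ Ioo c d, 0 ≤ f y z)
    (hfin : ∫⁻ y in Ioo a b, ∫⁻ z in Ioo c d, ENNReal.ofReal (f y z) ≠ ∞) :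
    ∫ y in a..b, ∫ z in c..d, f y z =
      (∫⁻ y in Ioo a b, ∫⁻ z in Ioo c d, ENNReal.ofReal (f y z)).toReal := by
  have hL : Measurable fun y => ∫⁻ z in Ioo c d, ENNReal.ofReal (f y z) :=
    hf.ennreal_ofReal.lintegral_prod_right'
  rw [intervalIntegral.integral_of_le hab, integral_Ioc_eq_integral_Ioo,
    ← integral_toReal hL.aemeasurable (ae_lt_top' hL.aemeasurable hfin)]
  refine setIntegral_congr_fun measurableSet_Ioo fun y hy => ?_
  rw [intervalIntegral.integral_of_le hcd, integral_Ioc_eq_integral_Ioo,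
    integral_eq_lintegral_of_nonneg_ae (ae_restrict_of_forall_mem measurableSet_Ioo (hf0 y hy))
      (hf.comp measurable_prodMk_left).aestronglyMeasurable]

lemma RH_eq_toReal_covLIntegral (H : ℝ → ℝ) {s t : ℝ} (hs : 0 < s) (ht : 0 < t)
    (hfin : covLIntegral (H t) (H s) t s ≠ ∞) :
    RH H t s = cH (H t) * cH (H s) * (covLIntegral (H t) (H s) t s).toReal := by
  have hW : Measurable fun u => ENNReal.ofReal (u ^ (1 - H t - H s)) *
      kernelLIntegral (H t) t u * kernelLIntegral (H s) s u :=
    ((measurable_id.pow_const _).ennreal_ofReal.mul (measurable_kernelLIntegral _ t)).mul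
      (measurable_kernelLIntegral _ s)
  rw [covLIntegral] at hfin ⊢
  rw [RH, intervalIntegral.integral_of_le (lt_min hs ht).le, integral_Ioc_eq_integral_Ioo,
    ← integral_toReal hW.aemeasurable (ae_lt_top' hW.aemeasurable hfin), ← integral_const_mul]
  refine setIntegral_congr_fun measurableSet_Ioo fun u ⟨hu, hum⟩ => ?_
  rw [KH_eq_toReal_kernelLIntegral H hu.le (hum.le.trans (min_le_right s t)),
    KH_eq_toReal_kernelLIntegral H hu.le (hum.le.trans (min_le_left s t)),
    ENNReal.toReal_mul, ENNReal.toReal_mul, ENNReal.toReal_ofReal (by positivity),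
    show 1 - H t - H s = (1 / 2 - H t) + (1 / 2 - H s) by ring, Real.rpow_add hu]
  ring

theorem RH_form_four_general (H : ℝ → ℝ)
    (hH : ∀ t, 0 ≤ t → H t ∈ Set.Ioo (1 / 2 : ℝ) 1)
    (s t : ℝ) (hs : 0 < s) (ht : 0 < t) :
    RH H t s = cH (H t) * cH (H s) *
      ∫ y in (0 : ℝ)..t, ∫ z in (0 : ℝ)..s,
        ((if z < y then Beta (H s - 1 / 2) (2 - H s - H t) else 0)
            + (if y < z then Beta (H t - 1 / 2) (2 - H t - H s) else 0))
          * (y / z) ^ (H t - H s) * |y - z| ^ (H s + H t - 2) := by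
  change _ = _ * ∫ y in (0 : ℝ)..t, ∫ z in (0 : ℝ)..s, covDensity (H t) (H s) y z
  obtain ⟨ha, ha1⟩ := hH t ht.le
  obtain ⟨hb, hb1⟩ := hH s hs.le
  have hab : H t + H s < 2 := by linarith
  have hfin := covLIntegral_ne_top ha hb hab hs.le ht.le
  rw [RH_eq_toReal_covLIntegral H hs ht hfin, covLIntegral_eq_lintegral_covDensity ha hb hab,
    intervalIntegral_intervalIntegral_eq_toReal_setLIntegral measurable_covDensity ht.le hs.le
      (fun y hy z hz => covDensity_nonneg ha hb hab hy.1.le hz.1.le)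
      (covLIntegral_eq_lintegral_covDensity ha hb hab ▸ hfin)]

/-- form (iv) of the covariance function `R_H` (for `s, t > 0`). -/
theorem RH_form_four (H : ℝ → ℝ) (hmeas : Measurable H)
    (hH : ∀ t, 0 ≤ t → H t ∈ Set.Ioo (1 / 2 : ℝ) 1)
    (s t : ℝ) (hs : 0 < s) (ht : 0 < t) :
    RH H t s = cH (H t) * cH (H s) *
      ∫ y in (0 : ℝ)..t, ∫ z in (0 : ℝ)..s,
        ((if z < y then Beta (H s - 1 / 2) (2 - H s - H t) else 0)
            + (if y < z then Beta (H t - 1 / 2) (2 - H t - H s) else 0))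
          * (y / z) ^ (H t - H s) * |y - z| ^ (H s + H t - 2) :=
  RH_form_four_general H hH s t hs ht
end

section
/- Let H : [0,∞) → (1/2,1) be measurable and let s, t ≥ 0 be such that H_t = H_s. Then R_H(t,s) = (1/2)( s^{2H_t} + t^{2H_t} − |t−s|^{2H_t} ). In particular, R_H(t,t) = t^{2H_t} for all t ≥ 0. -/
open MeasureTheory Set Filter

/-!
With `H_t = H_s = h` both kernels are those of fractional Brownian motion of index `h`, so only
the constant-index covariance has to be computed. All integrands are nonnegative, so we work with
lower Lebesgue integrals, where Tonelli needs no integrability. Expanding both kernels,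
`R(t,s) = c_h² ∫₀ᵗ ∫₀ˢ ∫₀^{x∧y} u^{1-2h} (x-u)^{h-3/2} x^{h-1/2} (y-u)^{h-3/2} y^{h-1/2} du dy dx`.
For `y < x` the substitution `v = (x-y)u / (y(x-u))` turns the inner integral into
`β(2-2h, h-1/2) |x-y|^{2h-2}`, and since `x ↦ |x|^r x / (r+1)` is an antiderivative of `|x|^r`,
`∫₀ᵗ ∫₀ˢ |x-y|^{2h-2} dy dx = (s^{2h} + t^{2h} - |t-s|^{2h}) / ((2h-1) 2h)`.
The normalisation `c_h² = h(2h-1) / β(2-2h, h-1/2)` leaves the factor `1/2`.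
-/

open scoped ENNReal Topology

lemma ofReal_intervalIntegral_eq_setLIntegral_Ioo {f : ℝ → ℝ} {a b : ℝ} (hab : a ≤ b)
    (hf : IntervalIntegrable f volume a b) (hf_nonneg : ∀ x ∈ Ioo a b, 0 ≤ f x) :
    ENNReal.ofReal (∫ x in a..b, f x) = ∫⁻ x in Ioo a b, ENNReal.ofReal (f x) := by
  rw [intervalIntegral.integral_of_le hab, integral_Ioc_eq_integral_Ioo,
    ofReal_integral_eq_lintegral_ofReal
      ((intervalIntegrable_iff_integrableOn_Ioo_of_le hab).1 hf)
      (ae_restrict_of_forall_mem measurableSet_Ioo hf_nonneg)]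

lemma Measurable.setLIntegral_Ioo {α : Type*} [MeasurableSpace α] {f : α → ℝ → ℝ≥0∞}
    (hf : Measurable (Function.uncurry f)) {a b : α → ℝ} (ha : Measurable a)
    (hb : Measurable b) : Measurable fun u => ∫⁻ x in Ioo (a u) (b u), f u x := by
  simp_rw [← lintegral_indicator measurableSet_Ioo]
  refine Measurable.lintegral_prod_right'
    (f := fun p : α × ℝ => (Ioo (a p.1) (b p.1)).indicator (f p.1) p.2) ?_
  exact Measurable.ite ((measurableSet_lt (ha.comp measurable_fst) measurable_snd).inter
    (measurableSet_lt measurable_snd (hb.comp measurable_fst))) hf measurable_const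

lemma lintegral_lintegral_lintegral_swap {α β γ : Type*} [MeasurableSpace α] [MeasurableSpace β]
    [MeasurableSpace γ] {μ : Measure α} {ν : Measure β} {ρ : Measure γ} [SFinite μ] [SFinite ν]
    [SFinite ρ] {f : α → β → γ → ℝ≥0∞}
    (hf : Measurable fun p : α × β × γ => f p.1 p.2.1 p.2.2) :
    ∫⁻ u, ∫⁻ x, ∫⁻ y, f u x y ∂ρ ∂ν ∂μ = ∫⁻ x, ∫⁻ y, ∫⁻ u, f u x y ∂μ ∂ρ ∂ν := by
  rw [lintegral_lintegral_swap ((hf.comp (by fun_prop :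
      Measurable fun p : (α × β) × γ => (p.1.1, p.1.2, p.2))).lintegral_prod_right').aemeasurable]
  exact lintegral_congr fun x => lintegral_lintegral_swap
    (hf.comp (by fun_prop : Measurable fun p : α × γ => (p.1, x, p.2))).aemeasurable

lemma ite_lintegral {α : Type*} [MeasurableSpace α] {μ : Measure α} (c : Prop) [Decidable c]
    (g : α → ℝ≥0∞) : (if c then ∫⁻ x, g x ∂μ else 0) = ∫⁻ x, (if c then g x else 0) ∂μ := by
  split_ifs <;> simp

lemma lintegral_Ioo_triangle_swap {f : ℝ → ℝ → ℝ → ℝ≥0∞}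
    (hf : Measurable fun p : ℝ × ℝ × ℝ => f p.1 p.2.1 p.2.2) (s t : ℝ) :
    ∫⁻ u in Ioo 0 (min s t), ∫⁻ x in Ioo u t, ∫⁻ y in Ioo u s, f u x y
      = ∫⁻ x in Ioo 0 t, ∫⁻ y in Ioo 0 s, ∫⁻ u in Ioo 0 (min x y), f u x y := by
  simp only [← lintegral_indicator measurableSet_Ioo, indicator_apply, mem_Ioo, ite_lintegral,
    ← ite_and]
  rw [lintegral_lintegral_lintegral_swap]
  · refine lintegral_congr fun x => lintegral_congr fun y => lintegral_congr fun u => ?_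
    congr 1
    simp only [lt_min_iff, eq_iff_iff]
    constructor
    · rintro ⟨⟨hu, hus, hut⟩, ⟨hux, hxt⟩, huy, hys⟩
      exact ⟨⟨hu.trans hux, hxt⟩, ⟨hu.trans huy, hys⟩, hu, hux, huy⟩
    · rintro ⟨⟨-, hxt⟩, ⟨-, hys⟩, hu, hux, huy⟩
      exact ⟨⟨hu, huy.trans hys, hux.trans hxt⟩, ⟨hux, hxt⟩, huy, hys⟩
  · refine Measurable.ite ?_ hf measurable_const
    measurability

lemma intervalIntegrable_abs_rpow {r : ℝ} (hr : -1 < r) (a b : ℝ) :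
    IntervalIntegrable (fun x => |x| ^ r) volume a b := by
  suffices h : ∀ c, 0 ≤ c → IntervalIntegrable (fun x => |x| ^ r) volume 0 c by
    have h' : ∀ c, IntervalIntegrable (fun x => |x| ^ r) volume 0 c := by
      intro c
      rcases le_total 0 c with hc | hc
      · exact h c hc
      · have := h (-c) (by linarith)
        rw [IntervalIntegrable.iff_comp_neg] at this
        simpa using this
    exact (h' a).symm.trans (h' b)
  intro c hc
  refine (intervalIntegral.intervalIntegrable_rpow' hr).congr fun x hx => ?_
  rw [uIoc_of_le hc] at hx
  simp [abs_of_pos hx.1]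

lemma continuous_abs_rpow_mul_self {r : ℝ} (hr : -1 < r) :
    Continuous fun x : ℝ => |x| ^ r * x := by
  have hnorm : ∀ x : ℝ, ‖|x| ^ r * x‖ = |x| ^ (r + 1) := fun x => by
    rw [Real.norm_eq_abs, abs_mul, abs_of_nonneg (Real.rpow_nonneg (abs_nonneg x) r),
      Real.rpow_add_one' (abs_nonneg x) (by linarith)]
  refine continuous_iff_continuousAt.2 fun x => ?_
  rcases eq_or_ne x 0 with rfl | hx
  · have h0 : Tendsto (fun x : ℝ => |x| ^ (r + 1)) (𝓝 0) (𝓝 0) := by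
      have := ((Real.continuous_rpow_const (q := r + 1) (by linarith)).comp
        continuous_abs).tendsto (0 : ℝ)
      simpa [Function.comp_def, Real.zero_rpow (by linarith : r + 1 ≠ 0)] using this
    simpa [ContinuousAt] using squeeze_zero_norm (fun x => (hnorm x).le) h0
  · exact ((continuous_abs.continuousAt.rpow_const (Or.inl (abs_ne_zero.2 hx))).mul
      continuousAt_id)

lemma hasDerivAt_abs_rpow_mul_self {r : ℝ} {x : ℝ} (hx : x ≠ 0) :
    HasDerivAt (fun x : ℝ => |x| ^ r * x) ((r + 1) * |x| ^ r) x := by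
  have h := ((hasDerivAt_abs hx).rpow_const (p := r) (Or.inl (abs_ne_zero.2 hx))).mul
    (hasDerivAt_id x)
  refine h.congr_deriv ?_
  have hsx : (SignType.sign x : ℝ) * x = |x| := by
    rcases hx.lt_or_gt with h | h <;> simp [h, abs_of_neg, abs_of_pos]
  have hpow : |x| ^ (r - 1) * |x| = |x| ^ r := by
    rw [← Real.rpow_add_one (abs_ne_zero.2 hx)]
    ring_nf
  simp only [id_eq, mul_one]
  linear_combination (r * |x| ^ (r - 1)) * hsx + r * hpow

lemma integral_abs_rpow {r : ℝ} (hr : -1 < r) (a b : ℝ) :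
    ∫ x in a..b, |x| ^ r = (|b| ^ r * b - |a| ^ r * a) / (r + 1) := by
  have hr1 : r + 1 ≠ 0 := by linarith
  rw [eq_div_iff hr1, mul_comm, ← intervalIntegral.integral_const_mul]
  exact integral_eq_of_hasDerivAt_off_countable _ _ (countable_singleton 0)
    (continuous_abs_rpow_mul_self hr).continuousOn
    (fun x hx => hasDerivAt_abs_rpow_mul_self hx.2)
    ((intervalIntegrable_abs_rpow hr a b).const_mul _)

lemma integral_abs_rpow_mul_self {r : ℝ} (hr : -1 < r) (a b : ℝ) :
    ∫ x in a..b, |x| ^ r * x = (|b| ^ (r + 2) - |a| ^ (r + 2)) / (r + 2) := by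
  have hr2 : r + 2 ≠ 0 := by linarith
  rw [eq_div_iff hr2, mul_comm, ← intervalIntegral.integral_const_mul]
  refine intervalIntegral.integral_eq_sub_of_hasDerivAt (f := fun x => |x| ^ (r + 2))
    (fun x _ => ?_) ((continuous_abs_rpow_mul_self hr).intervalIntegrable a b |>.const_mul _)
  refine (hasDerivAt_abs_rpow x (p := r + 2) (by linarith)).congr_deriv ?_
  rw [add_sub_cancel_right]
  ring

lemma integral_abs_sub_rpow {r : ℝ} (hr : -1 < r) (s x : ℝ) :
    ∫ y in (0 : ℝ)..s, |x - y| ^ r = (|x| ^ r * x - |x - s| ^ r * (x - s)) / (r + 1) := by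
  rw [intervalIntegral.integral_comp_sub_left (fun z => |z| ^ r), integral_abs_rpow hr, sub_zero]

lemma integral_integral_abs_sub_rpow {r : ℝ} (hr : -1 < r) (s t : ℝ) :
    ∫ x in (0 : ℝ)..t, ∫ y in (0 : ℝ)..s, |x - y| ^ r
      = (|s| ^ (r + 2) + |t| ^ (r + 2) - |t - s| ^ (r + 2)) / ((r + 1) * (r + 2)) := by
  simp_rw [integral_abs_sub_rpow hr]
  have hσ := continuous_abs_rpow_mul_self hr
  have hσs : IntervalIntegrable (fun x => |x - s| ^ r * (x - s)) volume 0 t :=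
    (hσ.comp (continuous_sub_right s)).intervalIntegrable _ _
  rw [intervalIntegral.integral_div, intervalIntegral.integral_sub (hσ.intervalIntegrable _ _) hσs,
    intervalIntegral.integral_comp_sub_right (fun z => |z| ^ r * z),
    integral_abs_rpow_mul_self hr, integral_abs_rpow_mul_self hr]
  simp only [abs_zero, zero_sub, abs_neg]
  rw [Real.zero_rpow (by linarith)]
  field_simp
  ring

lemma lintegral_lintegral_abs_sub_rpow {r : ℝ} (hr : -1 < r) {s t : ℝ} (hs : 0 ≤ s)
    (ht : 0 ≤ t) :
    ∫⁻ x in Ioo 0 t, ∫⁻ y in Ioo 0 s, ENNReal.ofReal (|x - y| ^ r)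
      = ENNReal.ofReal ((s ^ (r + 2) + t ^ (r + 2) - |t - s| ^ (r + 2)) / ((r + 1) * (r + 2))) := by
  have hinner : ∀ x, ∫⁻ y in Ioo 0 s, ENNReal.ofReal (|x - y| ^ r)
      = ENNReal.ofReal (∫ y in (0 : ℝ)..s, |x - y| ^ r) := fun x => by
    refine (ofReal_intervalIntegral_eq_setLIntegral_Ioo hs ?_ fun y _ => by positivity).symm
    simpa using (intervalIntegrable_abs_rpow hr x (x - s)).comp_sub_left x
  simp_rw [hinner]
  rw [← ofReal_intervalIntegral_eq_setLIntegral_Ioo ht, integral_integral_abs_sub_rpow hr,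
    abs_of_nonneg hs, abs_of_nonneg ht]
  · simp_rw [integral_abs_sub_rpow hr]
    exact (((continuous_abs_rpow_mul_self hr).sub ((continuous_abs_rpow_mul_self hr).comp
      (continuous_sub_right s))).div_const _).intervalIntegrable _ _
  · exact fun x _ => intervalIntegral.integral_nonneg hs fun y _ => by positivity

lemma lintegral_Ioo_rpow_mul_one_sub_rpow_s9 {α β : ℝ} (hα : 0 < α) (hβ : 0 < β) :
    ∫⁻ v in Ioo 0 1, ENNReal.ofReal (v ^ (α - 1) * (1 - v) ^ (β - 1))
      = ENNReal.ofReal (ProbabilityTheory.beta α β) := by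
  have hB := ProbabilityTheory.beta_pos hα hβ
  have h := ProbabilityTheory.lintegral_betaPDF_eq_one hα hβ
  rw [ProbabilityTheory.lintegral_betaPDF] at h
  simp_rw [mul_assoc, ENNReal.ofReal_mul (one_div_pos.2 hB).le] at h
  rw [lintegral_const_mul' _ _ ENNReal.ofReal_ne_top] at h
  rw [ENNReal.eq_inv_of_mul_eq_one_left ((mul_comm _ _).trans h), one_div,
    ENNReal.ofReal_inv_of_pos hB, inv_inv]

lemma lintegral_Ioo_rpow_mul_rpow_mul_rpow {α β x y : ℝ} (hα : 0 < α) (hβ : 0 < β) (hy : 0 < y)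
    (hyx : y < x) :
    ∫⁻ u in Ioo 0 y, ENNReal.ofReal (u ^ (α - 1) * (y - u) ^ (β - 1) * (x - u) ^ (-(α + β)))
      = ENNReal.ofReal
          (ProbabilityTheory.beta α β * y ^ (α + β - 1) / (x ^ β * (x - y) ^ α)) := by
  have hx : 0 < x := hy.trans hyx
  have hxy : 0 < x - y := sub_pos.2 hyx
  set g : ℝ → ℝ := fun u => (x - y) * u / (y * (x - u)) with hg
  set g' : ℝ → ℝ := fun u => x * (x - y) / (y * (x - u) ^ 2) with hg'
  have hderiv : ∀ u, u < x → HasDerivAt g (g' u) u := fun u hu => by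
    have hxu : y * (x - u) ≠ 0 := by have := sub_pos.2 hu; positivity
    refine (((hasDerivAt_id' u).const_mul (x - y)).div
      (((hasDerivAt_id' u).const_sub x).const_mul y) hxu).congr_deriv ?_
    simp only [hg']
    field_simp
    ring
  have hcont : ContinuousOn g (Icc 0 y) := fun u hu =>
    (hderiv u (hu.2.trans_lt hyx)).continuousAt.continuousWithinAt
  have hmono : StrictMonoOn g (Icc 0 y) := by
    refine strictMonoOn_of_deriv_pos (convex_Icc 0 y) hcont fun u hu => ?_
    rw [interior_Icc] at hu
    rw [(hderiv u (hu.2.trans hyx)).deriv]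
    have := sub_pos.2 (hu.2.trans hyx)
    positivity
  have himage : g '' Ioo 0 y = Ioo 0 1 := by
    rw [hcont.image_Ioo_of_strictMonoOn hy.le hmono]
    simp only [hg, mul_zero, zero_div]
    rw [mul_comm, div_self (by positivity)]
  set K := x ^ β * (x - y) ^ α / y ^ (α + β - 1) with hK
  have hK_pos : 0 < K := by positivity
  have hpoint : ∀ u ∈ Ioo 0 y, ENNReal.ofReal |g' u| *
      ENNReal.ofReal (g u ^ (α - 1) * (1 - g u) ^ (β - 1))
        = ENNReal.ofReal K *
          ENNReal.ofReal (u ^ (α - 1) * (y - u) ^ (β - 1) * (x - u) ^ (-(α + β))) := by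
    intro u ⟨hu, huy⟩
    have hyu : 0 < y - u := sub_pos.2 huy
    have hxu : 0 < x - u := by linarith
    have h1g : 1 - g u = x * (y - u) / (y * (x - u)) := by
      simp only [hg]
      field_simp
      ring
    rw [← ENNReal.ofReal_mul (abs_nonneg _), ← ENNReal.ofReal_mul hK_pos.le, h1g,
      abs_of_pos (by positivity)]
    congr 1
    refine Real.log_injOn_pos (Set.mem_Ioi.2 (by positivity)) (Set.mem_Ioi.2 (by positivity)) ?_
    simp (disch := positivity) only [hg, hg', hK, Real.log_mul, Real.log_div, Real.log_rpow,
      Real.log_pow]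
    push_cast
    ring
  have hchange := lintegral_image_eq_lintegral_abs_deriv_mul measurableSet_Ioo
    (fun u hu => (hderiv u (hu.2.trans hyx)).hasDerivWithinAt)
    (hmono.injOn.mono Ioo_subset_Icc_self)
    (fun v => ENNReal.ofReal (v ^ (α - 1) * (1 - v) ^ (β - 1)))
  rw [himage, lintegral_Ioo_rpow_mul_one_sub_rpow_s9 hα hβ,
    setLIntegral_congr_fun measurableSet_Ioo hpoint,
    lintegral_const_mul' _ _ ENNReal.ofReal_ne_top] at hchange
  have hBK : ProbabilityTheory.beta α β * y ^ (α + β - 1) / (x ^ β * (x - y) ^ α)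
      = ProbabilityTheory.beta α β / K := by
    rw [hK]
    field_simp
  rw [hBK, ENNReal.ofReal_div_of_pos hK_pos, hchange, mul_comm,
    ENNReal.mul_div_cancel_right (by positivity) ENNReal.ofReal_ne_top]

noncomputable def covarianceDensity (h u x y : ℝ) : ℝ :=
  u ^ (1 - 2 * h) * ((x - u) ^ (h - 3 / 2) * x ^ (h - 1 / 2)) *
    ((y - u) ^ (h - 3 / 2) * y ^ (h - 1 / 2))

lemma measurable_covarianceDensity (h : ℝ) :
    Measurable fun p : ℝ × ℝ × ℝ => covarianceDensity h p.1 p.2.1 p.2.2 := by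
  unfold covarianceDensity
  fun_prop

lemma KH_nonneg (H : ℝ → ℝ) (t : ℝ) {u : ℝ} (hu : 0 ≤ u) : 0 ≤ KH H t u := by
  unfold KH
  split_ifs with hut
  · refine mul_nonneg (mul_nonneg (Real.sqrt_nonneg _) (by positivity))
      (intervalIntegral.integral_nonneg hut fun x hx => ?_)
    have := sub_nonneg.2 hx.1
    have := hu.trans hx.1
    positivity
  · exact le_rfl

lemma intervalIntegrable_kernel {h : ℝ} (hh : 1 / 2 < h) (u a b : ℝ) :
    IntervalIntegrable (fun x => (x - u) ^ (h - 3 / 2) * x ^ (h - 1 / 2)) volume a b := by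
  have hsing := (intervalIntegral.intervalIntegrable_rpow' (r := h - 3 / 2) (by linarith)
    (a := a - u) (b := b - u)).comp_sub_right u
  simp only [sub_add_cancel] at hsing
  exact hsing.mul_continuousOn
    (Real.continuous_rpow_const (by linarith)).continuousOn

lemma ofReal_KH_mul_KH {h s t u : ℝ} (hh : 1 / 2 < h) (hu : u ∈ Ioo 0 (min s t)) :
    ENNReal.ofReal (KH (fun _ => h) t u * KH (fun _ => h) s u)
      = ENNReal.ofReal (cH h ^ 2) *
          ∫⁻ x in Ioo u t, ∫⁻ y in Ioo u s, ENNReal.ofReal (covarianceDensity h u x y) := by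
  obtain ⟨hu0, hus, hut⟩ : 0 < u ∧ u < s ∧ u < t := ⟨hu.1, lt_min_iff.1 hu.2⟩
  have hI : ∀ r, u < r → ENNReal.ofReal (∫ x in u..r, (x - u) ^ (h - 3 / 2) * x ^ (h - 1 / 2))
      = ∫⁻ x in Ioo u r, ENNReal.ofReal ((x - u) ^ (h - 3 / 2) * x ^ (h - 1 / 2)) := fun r hr =>
    ofReal_intervalIntegral_eq_setLIntegral_Ioo hr.le (intervalIntegrable_kernel hh u u r)
      fun x hx => by have := sub_pos.2 hx.1; have := hu0.trans hx.1; positivity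
  have hI_nonneg : ∀ r, u < r →
      0 ≤ ∫ x in u..r, (x - u) ^ (h - 3 / 2) * x ^ (h - 1 / 2) := fun r hr =>
    intervalIntegral.integral_nonneg hr.le fun x hx => by
      have := sub_nonneg.2 hx.1; have := hu0.le.trans hx.1; positivity
  have hpow : u ^ ((1 : ℝ) / 2 - h) * u ^ ((1 : ℝ) / 2 - h) = u ^ (1 - 2 * h) := by
    rw [← Real.rpow_add hu0]
    ring_nf
  have hW : ∀ x ∈ Ioo u t, ∀ y ∈ Ioo u s, ENNReal.ofReal (covarianceDensity h u x y)
      = ENNReal.ofReal (u ^ (1 - 2 * h)) *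
          (ENNReal.ofReal ((x - u) ^ (h - 3 / 2) * x ^ (h - 1 / 2)) *
            ENNReal.ofReal ((y - u) ^ (h - 3 / 2) * y ^ (h - 1 / 2))) := by
    intro x hx y hy
    have := sub_pos.2 hx.1; have := hu0.trans hx.1
    have := sub_pos.2 hy.1; have := hu0.trans hy.1
    rw [covarianceDensity, mul_assoc, ENNReal.ofReal_mul (by positivity),
      ENNReal.ofReal_mul (by positivity)]
  simp only [KH, if_pos hut.le, if_pos hus.le]
  rw [setLIntegral_congr_fun measurableSet_Ioo fun x hx =>
      setLIntegral_congr_fun measurableSet_Ioo (hW x hx)]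
  simp_rw [lintegral_const_mul' _ _ ENNReal.ofReal_ne_top]
  rw [← hI s hus, lintegral_mul_const' _ _ ENNReal.ofReal_ne_top, ← hI t hut,
    ← ENNReal.ofReal_mul (hI_nonneg t hut), ← ENNReal.ofReal_mul (by positivity),
    ← ENNReal.ofReal_mul (sq_nonneg _), ← hpow]
  congr 1
  ring

lemma lintegral_Ioo_min_covarianceDensity {h x y : ℝ} (hh : h ∈ Ioo (1 / 2 : ℝ) 1) (hx : 0 < x)
    (hy : 0 < y) (hxy : x ≠ y) :
    ∫⁻ u in Ioo 0 (min x y), ENNReal.ofReal (covarianceDensity h u x y)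
      = ENNReal.ofReal
          (ProbabilityTheory.beta (2 - 2 * h) (h - 1 / 2) * |x - y| ^ (2 * h - 2)) := by
  wlog hyx : y < x generalizing x y
  · have := this hy hx hxy.symm (lt_of_le_of_ne (not_lt.1 hyx) hxy)
    rw [min_comm, abs_sub_comm, ← this]
    refine setLIntegral_congr_fun measurableSet_Ioo fun u _ => ?_
    rw [covarianceDensity, covarianceDensity, mul_right_comm]
  unfold covarianceDensity
  obtain ⟨hh1, hh2⟩ := hh
  have hcv := lintegral_Ioo_rpow_mul_rpow_mul_rpow (α := 2 - 2 * h) (β := h - 1 / 2)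
    (by linarith) (by linarith) hy hyx
  rw [show 2 - 2 * h - 1 = 1 - 2 * h by ring, show h - 1 / 2 - 1 = h - 3 / 2 by ring,
    show -(2 - 2 * h + (h - 1 / 2)) = h - 3 / 2 by ring,
    show 2 - 2 * h + (h - 1 / 2) - 1 = 1 / 2 - h by ring] at hcv
  have hc : 0 ≤ x ^ (h - 1 / 2) * y ^ (h - 1 / 2) := by positivity
  calc ∫⁻ u in Ioo 0 (min x y), ENNReal.ofReal (u ^ (1 - 2 * h) *
        ((x - u) ^ (h - 3 / 2) * x ^ (h - 1 / 2)) * ((y - u) ^ (h - 3 / 2) * y ^ (h - 1 / 2)))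
      = ∫⁻ u in Ioo 0 y, ENNReal.ofReal (x ^ (h - 1 / 2) * y ^ (h - 1 / 2)) * ENNReal.ofReal
          (u ^ (1 - 2 * h) * (y - u) ^ (h - 3 / 2) * (x - u) ^ (h - 3 / 2)) := by
        rw [min_eq_right hyx.le]
        refine setLIntegral_congr_fun measurableSet_Ioo fun u _ => ?_
        rw [← ENNReal.ofReal_mul hc]
        ring_nf
    _ = _ := by
        rw [lintegral_const_mul' _ _ ENNReal.ofReal_ne_top, hcv, ← ENNReal.ofReal_mul hc,
          abs_of_pos (sub_pos.2 hyx)]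
        have hB := ProbabilityTheory.beta_pos (α := 2 - 2 * h) (β := h - 1 / 2) (by linarith)
          (by linarith)
        have hxy' := sub_pos.2 hyx
        congr 1
        refine Real.log_injOn_pos (Set.mem_Ioi.2 (by positivity))
          (Set.mem_Ioi.2 (by positivity)) ?_
        simp (disch := positivity) only [Real.log_mul, Real.log_div, Real.log_rpow]
        ring

lemma lintegral_covarianceDensity {h s t : ℝ} (hh : h ∈ Ioo (1 / 2 : ℝ) 1) (hs : 0 ≤ s)
    (ht : 0 ≤ t) :
    ∫⁻ x in Ioo 0 t, ∫⁻ y in Ioo 0 s, ∫⁻ u in Ioo 0 (min x y),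
        ENNReal.ofReal (covarianceDensity h u x y)
      = ENNReal.ofReal (ProbabilityTheory.beta (2 - 2 * h) (h - 1 / 2)) *
          ENNReal.ofReal ((s ^ (2 * h) + t ^ (2 * h) - |t - s| ^ (2 * h)) /
            ((2 * h - 1) * (2 * h))) := by
  have hdiag : ∀ x ∈ Ioo (0 : ℝ) t, ∫⁻ y in Ioo 0 s, ∫⁻ u in Ioo 0 (min x y),
      ENNReal.ofReal (covarianceDensity h u x y)
        = ENNReal.ofReal (ProbabilityTheory.beta (2 - 2 * h) (h - 1 / 2)) *
            ∫⁻ y in Ioo 0 s, ENNReal.ofReal (|x - y| ^ (2 * h - 2)) := fun x hx => by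
    rw [← lintegral_const_mul' _ _ ENNReal.ofReal_ne_top]
    refine setLIntegral_congr_fun_ae measurableSet_Ioo ?_
    filter_upwards [(countable_singleton x).ae_notMem volume] with y hyx hy
    rw [lintegral_Ioo_min_covarianceDensity hh hx.1 hy.1 (Ne.symm hyx),
      ENNReal.ofReal_mul (ProbabilityTheory.beta_pos (by linarith [hh.2]) (by linarith [hh.1])).le]
  rw [setLIntegral_congr_fun measurableSet_Ioo hdiag,
    lintegral_const_mul' _ _ ENNReal.ofReal_ne_top,
    lintegral_lintegral_abs_sub_rpow (by linarith [hh.1]) hs ht,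
    show 2 * h - 2 + 2 = 2 * h by ring, show 2 * h - 2 + 1 = 2 * h - 1 by ring]

lemma RH_const_eq_toReal_lintegral {h s t : ℝ} (hh : 1 / 2 < h) (hs : 0 ≤ s) (ht : 0 ≤ t) :
    RH (fun _ => h) t s = (ENNReal.ofReal (cH h ^ 2) * ∫⁻ x in Ioo 0 t, ∫⁻ y in Ioo 0 s,
      ∫⁻ u in Ioo 0 (min x y), ENNReal.ofReal (covarianceDensity h u x y)).toReal := by
  have hdens : Measurable fun p : ℝ × ℝ × ℝ =>
      ENNReal.ofReal (covarianceDensity h p.1 p.2.1 p.2.2) :=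
    (measurable_covarianceDensity h).ennreal_ofReal
  set G : ℝ → ℝ≥0∞ := fun u => ∫⁻ x in Ioo u t, ∫⁻ y in Ioo u s,
      ENNReal.ofReal (covarianceDensity h u x y)
  have hG_meas : Measurable G :=
    Measurable.setLIntegral_Ioo (f := fun u x => ∫⁻ y in Ioo u s,
        ENNReal.ofReal (covarianceDensity h u x y))
      (Measurable.setLIntegral_Ioo
        (f := fun (p : ℝ × ℝ) y => ENNReal.ofReal (covarianceDensity h p.1 p.2 y))
        (hdens.comp (f := fun q : (ℝ × ℝ) × ℝ => (q.1.1, q.1.2, q.2)) (by fun_prop))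
        measurable_fst measurable_const)
      measurable_id measurable_const
  have hKK : ∀ u ∈ Ioo 0 (min s t),
      KH (fun _ => h) t u * KH (fun _ => h) s u = (ENNReal.ofReal (cH h ^ 2) * G u).toReal :=
    fun u hu => by
      rw [← ofReal_KH_mul_KH hh hu,
        ENNReal.toReal_ofReal (mul_nonneg (KH_nonneg _ t hu.1.le) (KH_nonneg _ s hu.1.le))]
  have hG_fin : ∀ u ∈ Ioo 0 (min s t), ENNReal.ofReal (cH h ^ 2) * G u < ⊤ := fun u hu => by
    rw [← ofReal_KH_mul_KH hh hu]
    exact ENNReal.ofReal_lt_top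
  rw [RH, intervalIntegral.integral_of_le (le_min hs ht), integral_Ioc_eq_integral_Ioo,
    setIntegral_congr_fun measurableSet_Ioo hKK,
    integral_toReal (hG_meas.const_mul _).aemeasurable
      (ae_restrict_of_forall_mem measurableSet_Ioo hG_fin),
    lintegral_const_mul _ hG_meas, lintegral_Ioo_triangle_swap hdens]

lemma cH_sq {h : ℝ} (hh : h ∈ Ioo (1 / 2 : ℝ) 1) :
    cH h ^ 2 = h * (2 * h - 1) / ProbabilityTheory.beta (2 - 2 * h) (h - 1 / 2) := by
  obtain ⟨hh1, hh2⟩ := hh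
  have hB := ProbabilityTheory.beta_pos (α := 2 - 2 * h) (β := h - 1 / 2) (by linarith)
    (by linarith)
  rw [cH, show Beta = ProbabilityTheory.beta from rfl,
    Real.sq_sqrt (div_nonneg (mul_nonneg (by linarith) (by linarith)) hB.le)]

lemma abs_sub_rpow_le_rpow_add_rpow {p s t : ℝ} (hp : 0 ≤ p) (hs : 0 ≤ s) (ht : 0 ≤ t) :
    |t - s| ^ p ≤ s ^ p + t ^ p := by
  rcases le_total s t with hst | hts
  · have := Real.rpow_le_rpow (abs_nonneg _) (show |t - s| ≤ t by
      rw [abs_of_nonneg (sub_nonneg.2 hst)]; linarith) hp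
    have := Real.rpow_nonneg hs p
    linarith
  · have := Real.rpow_le_rpow (abs_nonneg _) (show |t - s| ≤ s by
      rw [abs_of_nonpos (sub_nonpos.2 hts)]; linarith) hp
    have := Real.rpow_nonneg ht p
    linarith

lemma RH_const_eq_fBM_cov {h s t : ℝ} (hh : h ∈ Ioo (1 / 2 : ℝ) 1) (hs : 0 ≤ s) (ht : 0 ≤ t) :
    RH (fun _ => h) t s = 1 / 2 * (s ^ (2 * h) + t ^ (2 * h) - |t - s| ^ (2 * h)) := by
  have hB := ProbabilityTheory.beta_pos (α := 2 - 2 * h) (β := h - 1 / 2)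
    (by linarith [hh.2]) (by linarith [hh.1])
  have hD := sub_nonneg.2 (abs_sub_rpow_le_rpow_add_rpow (p := 2 * h) (by linarith [hh.1]) hs ht)
  have h2h : 0 < (2 * h - 1) * (2 * h) := mul_pos (by linarith [hh.1]) (by linarith [hh.1])
  rw [RH_const_eq_toReal_lintegral hh.1 hs ht, lintegral_covarianceDensity hh hs ht,
    ← ENNReal.ofReal_mul hB.le, ← ENNReal.ofReal_mul (sq_nonneg _),
    ENNReal.toReal_ofReal (by positivity), cH_sq hh]
  rw [← mul_assoc, div_mul_cancel₀ _ hB.ne', mul_div_assoc', div_eq_iff h2h.ne']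
  ring

theorem RH_eq_fBM_cov_general (H : ℝ → ℝ)
    (hH : ∀ t, 0 ≤ t → H t ∈ Set.Ioo (1 / 2 : ℝ) 1) :
    (∀ s t : ℝ, 0 ≤ s → 0 ≤ t → H t = H s →
        RH H t s = 1 / 2 * (s ^ (2 * H t) + t ^ (2 * H t) - |t - s| ^ (2 * H t)))
      ∧ ∀ t : ℝ, 0 ≤ t → RH H t t = t ^ (2 * H t) := by
  have hcov : ∀ s t : ℝ, 0 ≤ s → 0 ≤ t → H t = H s →
      RH H t s = 1 / 2 * (s ^ (2 * H t) + t ^ (2 * H t) - |t - s| ^ (2 * H t)) := by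
    intro s t hs ht hst
    rw [← RH_const_eq_fBM_cov (hH t ht) hs ht]
    -- `KH H r` reads `H` only at `r`
    simp only [RH, KH, hst]
  refine ⟨hcov, fun t ht => ?_⟩
  rw [hcov t t ht ht rfl, sub_self, abs_zero, Real.zero_rpow (by linarith [(hH t ht).1])]
  ring

/-- when `H_t = H_s`, `R_H` reduces to the fBM covariance; in particular the
variance is `R_H(t,t) = t^{2H_t}`. -/
theorem RH_eq_fBM_cov (H : ℝ → ℝ) (hmeas : Measurable H)
    (hH : ∀ t, 0 ≤ t → H t ∈ Set.Ioo (1 / 2 : ℝ) 1) :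
    (∀ s t : ℝ, 0 ≤ s → 0 ≤ t → H t = H s →
        RH H t s = 1 / 2 * (s ^ (2 * H t) + t ^ (2 * H t) - |t - s| ^ (2 * H t)))
      ∧ ∀ t : ℝ, 0 ≤ t → RH H t t = t ^ (2 * H t) :=
  RH_eq_fBM_cov_general H hH
end

section
/- Let H : [0,∞) → (1/2,1) be measurable, let a > 0, and define the rescaled parameter function H̄ : [0,∞) → (1/2,1) by H̄(t) = H(at). Then for all s, t ≥ 0, R_H(at, as) = a^{H̄(t)+H̄(s)} R_{H̄}(t,s). (This is the covariance form of the generalized self-similarity of fractional Brownian motion with variable Hurst parameter: X^H_{at} has the same finite dimensional distributions as a^{H̄_t} X^{H̄}_t.) -/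
/-!
Substituting `v = a w` in the inner integral of the kernel gives
`K_H(at, au) = a^{H̄_t - 1/2} K_{H̄}(t, u)`, the powers `a^{1/2 - H̄_t}`, `a^{H̄_t - 3/2}`,
`a^{H̄_t - 1/2}` and the Jacobian `a` combining to `a^{H̄_t - 1/2}`. Substituting `u = a x` in the
covariance integral contributes one more Jacobian `a`, and `1 + (H̄_t - 1/2) + (H̄_s - 1/2)` is the
claimed exponent.
-/

open MeasureTheory Set Filter

/-- For `x < 0`: `log (a * x) = log a + log x`, and the factor `cos (y * π)` of `Real.rpow`
depends only on the sign of the base. -/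
lemma Real.mul_rpow_of_pos_left {a : ℝ} (ha : 0 < a) (x y : ℝ) :
    (a * x) ^ y = a ^ y * x ^ y := by
  rcases le_or_gt 0 x with hx | hx
  · exact Real.mul_rpow ha.le hx
  · rw [Real.rpow_def_of_neg (mul_neg_of_pos_of_neg ha hx), Real.rpow_def_of_neg hx,
      Real.rpow_def_of_pos ha, Real.log_mul ha.ne' hx.ne, add_mul, Real.exp_add]
    ring

lemma intervalIntegral.integral_sub_rpow_mul_rpow_mul_left {a : ℝ} (ha : 0 < a) (p q u t : ℝ) :
    ∫ v in a * u..a * t, (v - a * u) ^ p * v ^ q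
      = a ^ (p + q + 1) * ∫ w in u..t, (w - u) ^ p * w ^ q := by
  rw [← intervalIntegral.smul_integral_comp_mul_left, smul_eq_mul]
  simp_rw [← mul_sub, Real.mul_rpow_of_pos_left ha, mul_mul_mul_comm (a ^ p),
    intervalIntegral.integral_const_mul, Real.rpow_add ha, Real.rpow_one]
  ring

lemma KH_mul_mul (H : ℝ → ℝ) {a : ℝ} (ha : 0 < a) (t u : ℝ) :
    KH H (a * t) (a * u) = a ^ (H (a * t) - 1 / 2) * KH (fun v => H (a * v)) t u := by
  simp only [KH, mul_le_mul_iff_right₀ ha]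
  split_ifs
  · rw [intervalIntegral.integral_sub_rpow_mul_rpow_mul_left ha, Real.mul_rpow_of_pos_left ha,
      show a ^ (H (a * t) - 1 / 2) = a ^ (1 / 2 - H (a * t))
        * a ^ (H (a * t) - 3 / 2 + (H (a * t) - 1 / 2) + 1) by rw [← Real.rpow_add ha]; ring_nf]
    ring
  · rw [mul_zero]

theorem RH_self_similar_general (H : ℝ → ℝ)
    (a : ℝ) (ha : 0 < a) (s t : ℝ) :
    RH H (a * t) (a * s)
      = a ^ (H (a * t) + H (a * s)) * RH (fun u => H (a * u)) t s := by
  unfold RH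
  conv_lhs => rw [← mul_min_of_nonneg _ _ ha.le, ← mul_zero a,
    ← intervalIntegral.smul_integral_comp_mul_left]
  simp_rw [KH_mul_mul H ha, mul_mul_mul_comm (a ^ (H (a * t) - 1 / 2)),
    intervalIntegral.integral_const_mul, smul_eq_mul, ← mul_assoc]
  congr 1
  have hexp : 1 + ((H (a * t) - 1 / 2) + (H (a * s) - 1 / 2)) = H (a * t) + H (a * s) := by ring
  rw [← hexp, Real.rpow_add ha, Real.rpow_add ha, Real.rpow_one, mul_assoc]

/-- covariance form of the generalized self-similarity:
`R_H(at, as) = a^{H̄_t + H̄_s} R_{H̄}(t,s)` with `H̄(t) = H(at)`. -/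
theorem RH_self_similar (H : ℝ → ℝ) (hmeas : Measurable H)
    (hH : ∀ t, 0 ≤ t → H t ∈ Set.Ioo (1 / 2 : ℝ) 1)
    (a : ℝ) (ha : 0 < a) (s t : ℝ) (hs : 0 ≤ s) (ht : 0 ≤ t) :
    RH H (a * t) (a * s)
      = a ^ (H (a * t) + H (a * s)) * RH (fun u => H (a * u)) t s :=
  RH_self_similar_general H a ha s t
end

section
/- Let H : (0,∞) → (1/2,1) be differentiable. For t > 0 and x ∈ ℝ, let p(t,x) = (2π t^{2H_t})^{−1/2} exp( −x² / (2 t^{2H_t}) ) be the transition density of fractional Brownian motion with variable Hurst parameter (the density of the centered Gaussian law with variance t^{2H_t}). Then p satisfies the Fokker–Planck-type equation ∂_t p(t,x) = ( H'(t) ln(t) + H_t / t ) t^{2H_t} ∂²_x p(t,x) for all t > 0 and x ∈ ℝ. -/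
/-! `p(t, ·)` is the centred Gaussian density of variance `v(t) = t ^ (2 H_t)`, and Gaussian
densities solve the heat equation in the variance, `∂_v φ = ½ ∂²_x φ`. The chain rule with
`v'(t) = 2 v(t) (H'(t) log t + H_t / t)` turns this into the stated equation. -/

open MeasureTheory Set Filter

open Real

theorem HasDerivAt.self_rpow {f : ℝ → ℝ} {f' t : ℝ} (hf : HasDerivAt f f' t) (ht : 0 < t) :
    HasDerivAt (fun τ => τ ^ f τ) (t ^ f t * (f' * Real.log t + f t / t)) t := by
  refine ((hasDerivAt_id t).rpow hf ht).congr_deriv ?_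
  rw [id, rpow_sub ht, rpow_one]
  field_simp
  ring

noncomputable def gaussianDensity (v x : ℝ) : ℝ :=
  (2 * π * v) ^ (-(1 : ℝ) / 2) * exp (-x ^ 2 / (2 * v))

theorem hasDerivAt_gaussianDensity (v x : ℝ) :
    HasDerivAt (gaussianDensity v) (-(x / v) * gaussianDensity v x) x := by
  have hexponent : HasDerivAt (fun y => -y ^ 2 / (2 * v)) (-(x / v)) x := by
    refine ((hasDerivAt_pow 2 x).neg.div_const (2 * v)).congr_deriv ?_
    ring
  refine (hexponent.exp.const_mul ((2 * π * v) ^ (-(1 : ℝ) / 2))).congr_deriv ?_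
  rw [gaussianDensity]
  ring

theorem deriv_deriv_gaussianDensity (v x : ℝ) :
    deriv (deriv (gaussianDensity v)) x = gaussianDensity v x * ((x ^ 2 / v - 1) / v) := by
  have hderiv : deriv (gaussianDensity v) = fun y => -(y / v) * gaussianDensity v y :=
    funext fun y => (hasDerivAt_gaussianDensity v y).deriv
  have hlin : HasDerivAt (fun y => -(y / v)) (-(1 / v)) x := ((hasDerivAt_id x).div_const v).neg
  rw [hderiv, (hlin.fun_mul (hasDerivAt_gaussianDensity v x)).deriv]
  ring

theorem hasDerivAt_gaussianDensity_variance {v : ℝ} (hv : 0 < v) (x : ℝ) :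
    HasDerivAt (fun w => gaussianDensity w x) (deriv (deriv (gaussianDensity v)) x / 2) v := by
  have h2πv : 0 < 2 * π * v := by positivity
  have hprefactor : HasDerivAt (fun w => (2 * π * w) ^ (-(1 : ℝ) / 2))
      (2 * π * (-(1 : ℝ) / 2) * (2 * π * v) ^ (-(1 : ℝ) / 2 - 1)) v := by
    simpa using ((hasDerivAt_id v).const_mul (2 * π)).rpow_const (p := -(1 : ℝ) / 2)
      (Or.inl h2πv.ne')
  have hexponent : HasDerivAt (fun w => -x ^ 2 / (2 * w)) (x ^ 2 / (2 * v ^ 2)) v := by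
    have := ((hasDerivAt_id v).const_mul 2).inv (by positivity) |>.const_mul (-x ^ 2)
    simp only [id, div_eq_mul_inv] at this ⊢
    refine this.congr_deriv ?_
    field_simp
  refine (hprefactor.mul hexponent.exp).congr_deriv ?_
  rw [deriv_deriv_gaussianDensity, gaussianDensity, rpow_sub h2πv, rpow_one]
  field_simp
  ring

theorem fokker_planck_fBMvH_general (H : ℝ → ℝ)
    (hdiff : ∀ t : ℝ, 0 < t → DifferentiableAt ℝ H t)
    (p : ℝ → ℝ → ℝ)
    (hp : ∀ t x : ℝ, p t x
      = (2 * Real.pi * t ^ (2 * H t)) ^ (-(1 : ℝ) / 2)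
          * Real.exp (-x ^ 2 / (2 * t ^ (2 * H t))))
    (t x : ℝ) (ht : 0 < t) :
    deriv (fun τ => p τ x) t
      = (deriv H t * Real.log t + H t / t) * t ^ (2 * H t) * deriv (deriv (p t)) x := by
  obtain rfl : p = fun τ => gaussianDensity (τ ^ (2 * H τ)) := funext₂ hp
  have hvariance : HasDerivAt (fun τ => τ ^ (2 * H τ))
      (t ^ (2 * H t) * (2 * deriv H t * Real.log t + 2 * H t / t)) t :=
    ((hdiff t ht).hasDerivAt.const_mul 2).self_rpow ht
  have hheat := hasDerivAt_gaussianDensity_variance (rpow_pos_of_pos ht (2 * H t)) x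
  refine (hheat.comp t hvariance).deriv.trans ?_
  beta_reduce
  ring

/-- Fokker–Planck-type equation for the transition densities
`p(t,x) = (2π t^{2H_t})^{−1/2} exp(−x²/(2 t^{2H_t}))` of fBMvH:
`∂_t p(t,x) = (H'(t) ln t + H_t/t) t^{2H_t} ∂²_x p(t,x)`. -/
theorem fokker_planck_fBMvH (H : ℝ → ℝ)
    (hH : ∀ t : ℝ, 0 < t → H t ∈ Set.Ioo (1 / 2 : ℝ) 1)
    (hdiff : ∀ t : ℝ, 0 < t → DifferentiableAt ℝ H t)
    (p : ℝ → ℝ → ℝ)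
    (hp : ∀ t x : ℝ, p t x
      = (2 * Real.pi * t ^ (2 * H t)) ^ (-(1 : ℝ) / 2)
          * Real.exp (-x ^ 2 / (2 * t ^ (2 * H t))))
    (t x : ℝ) (ht : 0 < t) :
    deriv (fun τ => p τ x) t
      = (deriv H t * Real.log t + H t / t) * t ^ (2 * H t) * deriv (deriv (p t)) x :=
  fokker_planck_fBMvH_general H hdiff p hp t x ht
end
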